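/- arXiv:2012.05002 — 6 statements merged into one kernel-verified Lean document; each statement's English description precedes it below -/
import Mathlib

section
/- In the following 7-voter majority election there exists a perfectly persuasive private signaling scheme winning with probability 1: there is a map φ assigning to each state θ ∈ Θ a probability distribution φ(θ,·) over voting profiles c ∈ {c0,c1}^7 such that (i) every profile c with φ(θ,c) > 0 for some θ has at least 4 voters r with c_r = c0, and (ii) for every voter r ∈ {1,…,7}, Σ_{θ∈Θ} μ_θ · (Σ_{c : c_r = c0} φ(θ,c)) · u_r(θ) ≥ 0 and Σ_{θ∈Θ} μ_θ · (Σ_{c : c_r = c1} φ(θ,c)) · u_r(θ) ≤ 0 (each voter weakly prefers to follow the recommendation). -/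
open Finset

/-- Net utility `u r θ` of voter `r` for candidate `c0` over `c1` in state `θ`.
States: `0 = θ_A`, `1 = θ_B`, `2 = θ_C`. -/
noncomputable def voterUtility : Fin 7 → Fin 3 → ℝ :=
  fun r θ =>
    if r.val ≤ 1 then (if θ.val = 0 then 1 / 2 else -1)
    else if r.val ≤ 3 then (if θ.val = 1 then 1 / 2 else -1)
    else if r.val ≤ 5 then (if θ.val = 2 then 1 / 2 else -1)
    else 1 / 2

/-- The profile recommending `c0` exactly to voters `a, b, d, e`. -/
def pr (a b d e : Fin 7) : Fin 7 → Bool := fun r => decide (r = a ∨ r = b ∨ r = d ∨ r = e)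

/-- Point mass of weight `1/4` at profile `p`. -/
noncomputable def ind (p c : Fin 7 → Bool) : ℝ := if c = p then 1/4 else 0

/-- The signaling scheme: in each state, recommend `c0` to the two voters who like `c0`
in that state, to voter 7, and to one of the remaining four voters uniformly at random. -/
noncomputable def myφ : Fin 3 → (Fin 7 → Bool) → ℝ := fun θ c =>
  if θ.val = 0 then
    ind (pr 0 1 6 2) c + ind (pr 0 1 6 3) c + ind (pr 0 1 6 4) c + ind (pr 0 1 6 5) c
  else if θ.val = 1 then
    ind (pr 2 3 6 0) c + ind (pr 2 3 6 1) c + ind (pr 2 3 6 4) c + ind (pr 2 3 6 5) c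
  else
    ind (pr 4 5 6 0) c + ind (pr 4 5 6 1) c + ind (pr 4 5 6 2) c + ind (pr 4 5 6 3) c

lemma ind_nonneg (p c : Fin 7 → Bool) : 0 ≤ ind p c := by
  unfold ind; split <;> norm_num

lemma sum_ind (p : Fin 7 → Bool) : ∑ c, ind p c = 1/4 := by
  simp [ind, Finset.sum_ite_eq']

lemma sum_ind_filter (p : Fin 7 → Bool) (r : Fin 7) (b : Bool) :
    ∑ c ∈ univ.filter (fun c : Fin 7 → Bool => c r = b), ind p c
      = if p r = b then (1/4 : ℝ) else 0 := by
  rw [Finset.sum_filter]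
  have : ∀ c : Fin 7 → Bool,
      (if c r = b then ind p c else 0)
        = if c = p then (if p r = b then (1/4:ℝ) else 0) else 0 := by
    intro c
    rcases eq_or_ne c p with rfl | h
    · simp [ind]
    · simp [ind, h]
  simp only [this, Finset.sum_ite_eq', Finset.mem_univ, if_true]

lemma pos_four (p1 p2 p3 p4 c : Fin 7 → Bool)
    (h : 0 < ind p1 c + ind p2 c + ind p3 c + ind p4 c) :
    c = p1 ∨ c = p2 ∨ c = p3 ∨ c = p4 := by
  by_contra hcon
  push_neg at hcon
  simp [ind, hcon.1, hcon.2.1, hcon.2.2.1, hcon.2.2.2] at h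

/-- In the 7-voter majority election of Example 1 (uniform prior `1/3` on three states),
there exists a perfectly persuasive private signaling scheme that makes candidate `c0`
(encoded as `true`) win with probability 1. -/
theorem exists_private_scheme_winning_prob_one :
    ∃ φ : Fin 3 → (Fin 7 → Bool) → ℝ,
      (∀ θ c, 0 ≤ φ θ c) ∧
      (∀ θ, ∑ c, φ θ c = 1) ∧
      (∀ θ c, 0 < φ θ c → 4 ≤ (univ.filter (fun r => c r = true)).card) ∧
      (∀ r : Fin 7,
        0 ≤ ∑ θ, (1 / 3 : ℝ) *
            (∑ c ∈ univ.filter (fun c : Fin 7 → Bool => c r = true), φ θ c) *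
            voterUtility r θ ∧
        ∑ θ, (1 / 3 : ℝ) *
            (∑ c ∈ univ.filter (fun c : Fin 7 → Bool => c r = false), φ θ c) *
            voterUtility r θ ≤ 0) := by
  refine ⟨myφ, ?_, ?_, ?_, ?_⟩
  · intro θ c
    unfold myφ
    split_ifs <;>
      exact add_nonneg (add_nonneg (add_nonneg (ind_nonneg _ _) (ind_nonneg _ _))
        (ind_nonneg _ _)) (ind_nonneg _ _)
  · intro θ
    unfold myφ
    split_ifs <;> simp [Finset.sum_add_distrib, sum_ind] <;> norm_num
  · intro θ c h
    unfold myφ at h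
    split_ifs at h <;>
      rcases pos_four _ _ _ _ _ h with rfl | rfl | rfl | rfl <;> decide
  · intro r
    constructor <;>
    · simp only [Fin.sum_univ_three, myφ]
      norm_num [Finset.sum_add_distrib, sum_ind_filter]
      fin_cases r <;> simp [pr, voterUtility] <;> norm_num
end

section
/- In the following 7-voter majority election no public signal can make candidate c0 win: for every posterior probability distribution p over Θ (p_θ ≥ 0, Σ_θ p_θ = 1), the number of voters r ∈ {1,…,7} with Σ_{θ∈Θ} p_θ · u_r(θ) ≥ 0 is at most 3 (strictly fewer than the 4 votes needed for c0 to win). -/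
open Finset

/-- In the 7-voter majority election of Example 1, no public signal can make candidate
`c0` win: under any posterior `p` over the three states, at most 3 voters weakly prefer
`c0` (strictly fewer than the 4 votes needed). -/
theorem public_signaling_cannot_win (p : Fin 3 → ℝ)
    (hp0 : ∀ θ, 0 ≤ p θ) (hp1 : ∑ θ, p θ = 1) :
    (univ.filter (fun r : Fin 7 => 0 ≤ ∑ θ, p θ * voterUtility r θ)).card ≤ 3 := by
  have h := hp1
  rw [Fin.sum_univ_three] at h
  rw [card_filter, Fin.sum_univ_seven]
  simp only [voterUtility, Fin.sum_univ_three,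
    show ((0:Fin 7):ℕ) = 0 from rfl, show ((1:Fin 7):ℕ) = 1 from rfl,
    show ((2:Fin 7):ℕ) = 2 from rfl, show ((3:Fin 7):ℕ) = 3 from rfl,
    show ((4:Fin 7):ℕ) = 4 from rfl, show ((5:Fin 7):ℕ) = 5 from rfl,
    show ((6:Fin 7):ℕ) = 6 from rfl,
    show ((0:Fin 3):ℕ) = 0 from rfl, show ((1:Fin 3):ℕ) = 1 from rfl,
    show ((2:Fin 3):ℕ) = 2 from rfl]
  norm_num
  have h0 := hp0 0
  have h1 := hp0 1
  have h2 := hp0 2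
  split_ifs <;> norm_num <;> linarith
end

section
/- Upper-tail binomial bound proportional to the success probability: let ε > 0, α ∈ (0,1], p ∈ (0, 1/8], and let q be a positive integer with q ≥ 32·log(4/α)/ε². If X is a Binomial(q, p) random variable, then Pr( X/q − p ≥ ε/4 ) ≤ (α/4) · p. -/
open Finset

set_option maxHeartbeats 1000000

private lemma sub_one_div_le_log {t : ℝ} (ht : 0 < t) : (t - 1) / t ≤ Real.log t := by
  have h := Real.log_le_sub_one_of_pos (inv_pos.mpr ht)
  rw [Real.log_inv] at h
  have h2 : (t - 1) / t = 1 - t⁻¹ := by field_simp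
  rw [h2]; linarith

private lemma mono_lem {a B K : ℝ} (ha : 0 < a) (haB : a ≤ B) (hB : B ≤ 1) (hK : 1 ≤ K) :
    a * (K - Real.log a) ≤ B * (K - Real.log B) := by
  have hB0 : 0 < B := lt_of_lt_of_le ha haB
  have h1 : Real.log B - Real.log a ≤ B / a - 1 := by
    have := Real.log_le_sub_one_of_pos (div_pos hB0 ha)
    rwa [Real.log_div (ne_of_gt hB0) (ne_of_gt ha)] at this
  have h3 : a * (Real.log B - Real.log a) ≤ B - a := by
    have := mul_le_mul_of_nonneg_left h1 ha.le
    have e : a * (B / a - 1) = B - a := by field_simp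
    linarith [e ▸ this]
  have h2 : Real.log B ≤ 0 := Real.log_nonpos hB0.le hB
  have e1 : 0 ≤ (B - a) * (K - 1) := mul_nonneg (by linarith) (by linarith)
  have e2 : 0 ≤ (B - a) * (-Real.log B) := mul_nonneg (by linarith) (by linarith)
  nlinarith [h3, e1, e2]

private lemma h_quad {x : ℝ} (hx1 : 1 < x) (hx8 : x ≤ 8) :
    5 / 32 * (x - 1) ^ 2 ≤ x * Real.log x - x + 1 := by
  have hx0 : (0:ℝ) < x := by linarith
  rcases le_or_gt x 2 with h2 | h2
  · set s := Real.sqrt x with hs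
    have hs2 : s ^ 2 = x := Real.sq_sqrt hx0.le
    have hs0 : 0 < s := Real.sqrt_pos.mpr hx0
    have hlog : (s - 1) / s ≤ Real.log s := sub_one_div_le_log hs0
    have hsu : s - 1 ≤ s * Real.log s := by
      have := (div_le_iff₀ hs0).mp hlog
      linarith
    have hcx : Real.log x = 2 * Real.log s := by
      rw [← hs2, Real.log_pow]; push_cast; ring
    rw [hcx, ← hs2]
    have hsle : s ≤ 3/2 := by nlinarith
    nlinarith [mul_le_mul_of_nonneg_left hsu (by positivity : (0:ℝ) ≤ 2 * s),
      sq_nonneg (s - 1), sq_nonneg (s + 1)]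
  · have hcc := (strictConcaveOn_log_Ioi.concaveOn).2 (Set.mem_Ioi.mpr (by norm_num : (0:ℝ) < 2))
      (Set.mem_Ioi.mpr (by norm_num : (0:ℝ) < 8))
      (by linarith : (0:ℝ) ≤ (8 - x) / 6) (by linarith : (0:ℝ) ≤ (x - 2) / 6)
      (by ring : (8 - x) / 6 + (x - 2) / 6 = 1)
    have harg : ((8 - x) / 6) • (2:ℝ) + ((x - 2) / 6) • (8:ℝ) = x := by
      simp only [smul_eq_mul]; ring
    rw [harg] at hcc
    have hlog8 : Real.log 8 = 3 * Real.log 2 := by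
      rw [show (8:ℝ) = 2 ^ 3 by norm_num, Real.log_pow]; push_cast; ring
    simp only [smul_eq_mul, hlog8] at hcc
    have hchord : Real.log 2 * (x + 1) / 3 ≤ Real.log x := by linarith
    have ht := Real.log_two_gt_d9
    have hP := mul_le_mul_of_nonneg_left hchord hx0.le
    have hP2 : 0 ≤ (Real.log 2 - 0.693) * x ^ 2 :=
      mul_nonneg (by linarith) (sq_nonneg x)
    have hP3 : 0 ≤ (Real.log 2 - 0.693) * x :=
      mul_nonneg (by linarith) hx0.le
    nlinarith [hP, hP2, hP3, sq_nonneg (x - 3),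
      mul_nonneg (by linarith : (0:ℝ) ≤ x - 2) (by linarith : (0:ℝ) ≤ 8 - x)]

private lemma key_ineq {L p x : ℝ} (hL : 2 * Real.log 2 ≤ L) (hp0 : 0 < p) (hp8 : p ≤ 1/8)
    (hx1 : 1 < x) (hpx : p * x ≤ 1) :
    L - Real.log p ≤ 2 * L * (x * Real.log x - x + 1) / (p * (x - 1) ^ 2) := by
  have ht := Real.log_two_gt_d9
  have ht2 := Real.log_two_lt_d9
  have hx0 : (0:ℝ) < x := by linarith
  have hL0 : 0 < L := by linarith
  set c := Real.log x with hcDef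
  have hc0 : 0 < c := Real.log_pos hx1
  set a := p * x with haDef
  have ha0 : 0 < a := mul_pos hp0 hx0
  have hK : 1 ≤ L + c := by linarith
  have hY0 : (0:ℝ) < (x - 1) ^ 2 := pow_pos (by linarith) 2
  have hlogp : Real.log p = Real.log a - c := by
    rw [haDef, Real.log_mul (ne_of_gt hp0) (ne_of_gt hx0), hcDef]; ring
  have hW : a * ((L + c) - Real.log a) ≤ 2 * L * (x * (x * c - x + 1)) / (x - 1) ^ 2 := by
    rcases le_or_gt x 8 with h8 | h8
    · have hmono := mono_lem ha0 (show a ≤ x / 8 by rw [haDef]; nlinarith)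
        (by linarith : x / 8 ≤ 1) hK
      have hlogB : Real.log (x / 8) = c - 3 * Real.log 2 := by
        rw [Real.log_div (ne_of_gt hx0) (by norm_num), hcDef,
          show (8:ℝ) = 2 ^ 3 by norm_num, Real.log_pow]; push_cast; ring
      rw [hlogB] at hmono
      have h5 : 5 / 32 * (x - 1) ^ 2 ≤ x * c - x + 1 := by
        rw [hcDef]; exact h_quad hx1 h8
      have hgoal : x / 8 * (L + c - (c - 3 * Real.log 2)) ≤ 2 * L * (x * (x * c - x + 1)) / (x - 1) ^ 2 := by
        rw [le_div_iff₀ hY0]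
        have P1 := mul_le_mul_of_nonneg_left h5
          (mul_nonneg (by linarith : (0:ℝ) ≤ 2 * L) hx0.le)
        have P2 : 0 ≤ x * (x - 1) ^ 2 * (3 * L - 6 * Real.log 2) :=
          mul_nonneg (mul_nonneg hx0.le hY0.le) (by linarith)
        nlinarith [P1, P2]
      linarith
    · have hmono := mono_lem ha0 hpx le_rfl hK
      rw [Real.log_one] at hmono
      have hc3 : 3 * Real.log 2 ≤ c := by
        rw [hcDef, show (3:ℝ) * Real.log 2 = Real.log (2^3) by rw [Real.log_pow]; push_cast; ring]
        exact Real.log_le_log (by norm_num) (by norm_num; linarith)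
      have hc1 : 1 ≤ c := by linarith
      have hgoal : (L + c) ≤ 2 * L * (x * (x * c - x + 1)) / (x - 1) ^ 2 := by
        rw [le_div_iff₀ hY0]
        rcases le_or_gt x 16 with h16 | h16
        · have f1 : 16 * (x - 1) ^ 2 ≤ 225 * x := by
            nlinarith [mul_nonneg (by linarith : (0:ℝ) ≤ 16 - x) (by linarith : (0:ℝ) ≤ 16 * x - 1)]
          have f2 : 256 * (x - 1) ^ 2 ≤ 225 * x ^ 2 := by
            nlinarith [mul_nonneg (by linarith : (0:ℝ) ≤ 16 - x) (by linarith : (0:ℝ) ≤ 31 * x - 16)]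
          have scalar : 225 * (L + c) ≤ 2 * L * (256 * (c - 1) + 16) := by
            have hp1 : 0 ≤ (c - 3 * Real.log 2) * (512 * L - 225) :=
              mul_nonneg (by linarith) (by linarith)
            have hp2 : 0 ≤ (L - 2 * Real.log 2) * (1536 * Real.log 2 - 705) :=
              mul_nonneg (by linarith) (by linarith)
            have hp3 : 0 ≤ Real.log 2 * (1024 * Real.log 2 - 695) :=
              mul_nonneg (by linarith) (by linarith)
            nlinarith [hp1, hp2, hp3]
          have h1' := mul_le_mul_of_nonneg_left f2
            (mul_nonneg (by linarith : (0:ℝ) ≤ 2 * L) (by linarith : (0:ℝ) ≤ c - 1))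
          have h2' := mul_le_mul_of_nonneg_left f1 (by linarith : (0:ℝ) ≤ 2 * L)
          have h3' := mul_le_mul_of_nonneg_right scalar hY0.le
          nlinarith [h1', h2', h3']
        · have hc4 : 4 * Real.log 2 ≤ c := by
            rw [hcDef, show (4:ℝ) * Real.log 2 = Real.log (2^4) by rw [Real.log_pow]; push_cast; ring]
            exact Real.log_le_log (by norm_num) (by norm_num; linarith)
          have f2' : (x - 1) ^ 2 ≤ x ^ 2 := by nlinarith
          have scalar2 : (L + c) ≤ 2 * L * (c - 1) := by
            have hp1 : 0 ≤ (c - 4 * Real.log 2) * (2 * L - 1) :=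
              mul_nonneg (by linarith) (by linarith)
            have hp2 : 0 ≤ (L - 2 * Real.log 2) * (8 * Real.log 2 - 3) :=
              mul_nonneg (by linarith) (by linarith)
            have hp3 : 0 ≤ Real.log 2 * (16 * Real.log 2 - 10) :=
              mul_nonneg (by linarith) (by linarith)
            nlinarith [hp1, hp2, hp3]
          have h1' := mul_le_mul_of_nonneg_left f2'
            (mul_nonneg (by linarith : (0:ℝ) ≤ 2 * L) (by linarith : (0:ℝ) ≤ c - 1))
          have h3' := mul_le_mul_of_nonneg_right scalar2 hY0.le
          have h4' : 0 ≤ 2 * L * x := by positivity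
          nlinarith [h1', h3', h4']
      nlinarith [hgoal, hmono]
  have hdiv : (L + c) - Real.log a ≤ (2 * L * (x * (x * c - x + 1)) / (x - 1) ^ 2) / a := by
    rw [le_div_iff₀ ha0]
    linarith [hW]
  have hid : (2 * L * (x * (x * c - x + 1)) / (x - 1) ^ 2) / a = 2 * L * (x * c - x + 1) / (p * (x - 1) ^ 2) := by
    rw [haDef]; field_simp
  rw [hid] at hdiv
  rw [hlogp]
  linarith



/-- Upper-tail binomial bound proportional to the success probability: if `X ∼ Binomial(q,p)`
with `p ∈ (0,1/8]` and `q ≥ 32·log(4/α)/ε²`, then `Pr( X/q − p ≥ ε/4 ) ≤ (α/4)·p`. -/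
theorem binomial_upper_tail_prop_bound
    (ε α p : ℝ) (hε : 0 < ε) (hα : α ∈ Set.Ioc (0 : ℝ) 1)
    (hp : p ∈ Set.Ioc (0 : ℝ) (1 / 8))
    (q : ℕ) (hq : 0 < q) (hq2 : 32 * Real.log (4 / α) / ε ^ 2 ≤ q) :
    ∑ k ∈ (range (q + 1)).filter (fun k : ℕ => ε / 4 ≤ (k : ℝ) / q - p),
      (q.choose k : ℝ) * p ^ k * (1 - p) ^ (q - k) ≤ α / 4 * p := by
  obtain ⟨hα0, hα1⟩ := hα
  obtain ⟨hp0, hp8⟩ := hp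
  have hq0 : (0:ℝ) < (q:ℝ) := by exact_mod_cast hq
  set a : ℝ := p + ε / 4 with haDef
  have hpa : p < a := by simp only [haDef]; linarith
  have ha0 : 0 < a := lt_trans hp0 hpa
  by_cases hA : a ≤ 1
  case neg =>
    push_neg at hA
    have hemp : ∀ k ∈ range (q + 1), ¬ (ε / 4 ≤ (k : ℝ) / q - p) := by
      intro k hk hcon
      have hkq : (k:ℝ) ≤ q := by
        have := Nat.lt_succ_iff.mp (mem_range.mp hk)
        exact_mod_cast this
      have h1 : (k:ℝ) / q ≤ 1 := by rw [div_le_one hq0]; exact hkq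
      have : a ≤ 1 := by simp only [haDef]; linarith
      linarith
    rw [filter_false_of_mem hemp, sum_empty]
    positivity
  case pos =>
    have h1p : 0 < 1 - p := by linarith
    set x : ℝ := a / p with hxDef
    have hx1 : 1 < x := (one_lt_div hp0).mpr hpa
    have hx0 : (0:ℝ) < x := lt_trans one_pos hx1
    have hax : p * x = a := by rw [hxDef]; field_simp
    set c := Real.log x with hcDef
    have hc0 : 0 < c := Real.log_pos hx1
    set L := Real.log (4 / α) with hLDef
    have hL2 : 2 * Real.log 2 ≤ L := by
      have e4 : Real.log 4 = 2 * Real.log 2 := by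
        rw [show (4:ℝ) = 2 ^ 2 by norm_num, Real.log_pow]; push_cast; ring
      rw [hLDef, ← e4]
      apply Real.log_le_log (by norm_num)
      rw [le_div_iff₀ hα0]; nlinarith
    have hL0 : 0 < L := by
      have := Real.log_two_gt_d9; linarith
    -- termwise bound
    have hterm : ∀ k ∈ (range (q + 1)).filter (fun k : ℕ => ε / 4 ≤ (k : ℝ) / q - p),
        (q.choose k : ℝ) * p ^ k * (1 - p) ^ (q - k)
          ≤ Real.exp (-((q:ℝ) * a * c)) * ((q.choose k : ℝ) * a ^ k * (1 - p) ^ (q - k)) := by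
      intro k hk
      obtain ⟨hk1, hk2⟩ := mem_filter.mp hk
      have hkq : (q:ℝ) * a ≤ k := by
        have h' : a ≤ (k:ℝ) / q := by simp only [haDef]; linarith
        have := (le_div_iff₀ hq0).mp h'
        linarith
      have hxk : x ^ k = Real.exp ((k:ℝ) * c) := by
        rw [hcDef, ← Real.log_pow, Real.exp_log (pow_pos hx0 k)]
      have hexp1 : 1 ≤ Real.exp (-((q:ℝ) * a * c)) * x ^ k := by
        rw [hxk, ← Real.exp_add]
        apply Real.one_le_exp
        nlinarith [hc0.le]
      have hak : a ^ k = p ^ k * x ^ k := by rw [← hax, mul_pow]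
      calc (q.choose k : ℝ) * p ^ k * (1 - p) ^ (q - k)
          = 1 * ((q.choose k : ℝ) * p ^ k * (1 - p) ^ (q - k)) := by ring
        _ ≤ (Real.exp (-((q:ℝ) * a * c)) * x ^ k) * ((q.choose k : ℝ) * p ^ k * (1 - p) ^ (q - k)) := by
            apply mul_le_mul_of_nonneg_right hexp1
            positivity
        _ = Real.exp (-((q:ℝ) * a * c)) * ((q.choose k : ℝ) * a ^ k * (1 - p) ^ (q - k)) := by
            rw [hak]; ring
    refine le_trans (Finset.sum_le_sum hterm) ?_
    rw [← Finset.mul_sum]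
    have hsub : ∑ k ∈ (range (q + 1)).filter (fun k : ℕ => ε / 4 ≤ (k : ℝ) / q - p),
          (q.choose k : ℝ) * a ^ k * (1 - p) ^ (q - k)
        ≤ ∑ k ∈ range (q + 1), (q.choose k : ℝ) * a ^ k * (1 - p) ^ (q - k) := by
      apply Finset.sum_le_sum_of_subset_of_nonneg (filter_subset _ _)
      intro i _ _
      positivity
    have hbin : ∑ k ∈ range (q + 1), (q.choose k : ℝ) * a ^ k * (1 - p) ^ (q - k)
        = (a + (1 - p)) ^ q := by
      rw [add_pow]
      apply Finset.sum_congr rfl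
      intro k hk
      ring
    have hpow : (a + (1 - p)) ^ q ≤ Real.exp ((q:ℝ) * (a - p)) := by
      have h1 : a + (1 - p) ≤ Real.exp (a - p) := by
        have := Real.add_one_le_exp (a - p); linarith
      calc (a + (1 - p)) ^ q ≤ Real.exp (a - p) ^ q := by
            apply pow_le_pow_left₀ (by linarith) h1
        _ = Real.exp ((q:ℝ) * (a - p)) := by
            rw [← Real.exp_nat_mul]
    have hchain : Real.exp (-((q:ℝ) * a * c)) *
        (∑ k ∈ (range (q + 1)).filter (fun k : ℕ => ε / 4 ≤ (k : ℝ) / q - p),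
          (q.choose k : ℝ) * a ^ k * (1 - p) ^ (q - k))
        ≤ Real.exp (-((q:ℝ) * a * c)) * Real.exp ((q:ℝ) * (a - p)) := by
      apply mul_le_mul_of_nonneg_left _ (Real.exp_pos _).le
      calc _ ≤ ∑ k ∈ range (q + 1), (q.choose k : ℝ) * a ^ k * (1 - p) ^ (q - k) := hsub
        _ = (a + (1 - p)) ^ q := hbin
        _ ≤ Real.exp ((q:ℝ) * (a - p)) := hpow
    refine le_trans hchain ?_
    rw [← Real.exp_add]
    -- final step via key_ineq
    have hRHS : α / 4 * p = Real.exp (Real.log (α / 4 * p)) := (Real.exp_log (by positivity)).symm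
    rw [hRHS]
    apply Real.exp_le_exp.mpr
    have hlog : Real.log (α / 4 * p) = Real.log p - L := by
      rw [Real.log_mul (by positivity) (ne_of_gt hp0), hLDef,
        Real.log_div (ne_of_gt hα0) (by norm_num : (4:ℝ) ≠ 0),
        Real.log_div (by norm_num : (4:ℝ) ≠ 0) (ne_of_gt hα0)]
      ring
    rw [hlog]
    -- goal: -(q*a*c) + q*(a-p) ≤ log p - L, i.e. L - log p ≤ q*(a*c - a + p)
    have hg : a * c - a + p = p * (x * c - x + 1) := by
      rw [← hax]; ring
    have hh0 : 0 ≤ x * c - x + 1 := by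
      have hlx := sub_one_div_le_log hx0
      have : x - 1 ≤ c * x := (div_le_iff₀ hx0).mp hlx
      linarith
    have hq2' : 32 * L / ε ^ 2 * (a * c - a + p) ≤ (q:ℝ) * (a * c - a + p) := by
      apply mul_le_mul_of_nonneg_right hq2
      rw [hg]; exact mul_nonneg hp0.le hh0
    have heps : ε = 4 * (a - p) := by simp only [haDef]; ring
    have hxm1 : a - p = p * (x - 1) := by rw [← hax]; ring
    have hid : 32 * L / ε ^ 2 * (a * c - a + p) = 2 * L * (x * c - x + 1) / (p * (x - 1) ^ 2) := by
      rw [heps, hxm1, hg]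
      have hx1' : x - 1 ≠ 0 := by linarith
      field_simp
      ring
    have hkey := key_ineq hL2 hp0 hp8 hx1 (by rw [hax]; exact hA)
    rw [← hcDef] at hkey
    rw [← hid] at hkey
    have hexpand : (q:ℝ) * (a * c - a + p) = (q:ℝ) * a * c - (q:ℝ) * (a - p) := by ring
    have hfinal : L - Real.log p ≤ (q:ℝ) * a * c - (q:ℝ) * (a - p) := by
      rw [← hexpand]; exact le_trans hkey hq2'
    linarith [hfinal]
end

section
/- Conditional mean of the empirical distribution is close in L1: let Θ be a finite set, p* a probability distribution on Θ, ε > 0, q a positive integer, and γ̃ the empirical distribution of q i.i.d. samples from p*. Fix θ̄ ∈ Θ and an integer i with 0 ≤ i ≤ q such that Pr(γ̃_{θ̄} = i/q) > 0 and |i/q − p*_{θ̄}| ≤ ε/4. Then Σ_{θ∈Θ} | E[ γ̃_θ | γ̃_{θ̄} = i/q ] − p*_θ | ≤ ε/2. -/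
open Finset

/-- The empirical distribution of the sample tuple `x : Fin q → Θ`: the fraction of the
`q` samples equal to `θ`. -/
noncomputable def empDist {Θ : Type*} [DecidableEq Θ] {q : ℕ} (x : Fin q → Θ) (θ : Θ) : ℝ :=
  ((univ.filter (fun j => x j = θ)).card : ℝ) / q

/-- The probability of drawing the sample tuple `x` when each of the `q` samples is drawn
i.i.d. from `p`. -/
def sampleProb {Θ : Type*} (p : Θ → ℝ) {q : ℕ} (x : Fin q → Θ) : ℝ :=
  ∏ j, p (x j)

section Aux

variable {Θ : Type*} [Fintype Θ] [DecidableEq Θ] {q : ℕ}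

lemma sampleProb_update (p : Θ → ℝ) (x : Fin q → Θ) (j : Fin q) (θ' : Θ) :
    p θ' * sampleProb p x = p (x j) * sampleProb p (Function.update x j θ') := by
  have h1 : sampleProb p x = p (x j) * ∏ k ∈ univ.erase j, p (x k) :=
    (Finset.mul_prod_erase univ (fun k => p (x k)) (mem_univ j)).symm
  have h2 : sampleProb p (Function.update x j θ') = p θ' * ∏ k ∈ univ.erase j, p (x k) := by
    unfold sampleProb
    rw [← Finset.mul_prod_erase univ _ (mem_univ j), Function.update_self]
    congr 1
    exact Finset.prod_congr rfl fun k hk => by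
      rw [Function.update_of_ne (Finset.ne_of_mem_erase hk)]
  rw [h1, h2]; ring

lemma filter_update_eq (x : Fin q → Θ) (j : Fin q) (θ' θbar : Θ) (hxj : x j ≠ θbar)
    (hθ' : θ' ≠ θbar) :
    (univ.filter fun k => Function.update x j θ' k = θbar)
      = univ.filter fun k => x k = θbar := by
  ext k
  simp only [mem_filter, mem_univ, true_and]
  rcases eq_or_ne k j with rfl | hk
  · simp [Function.update_self, hθ', hxj]
  · rw [Function.update_of_ne hk]

lemma swap_j (p : Θ → ℝ) (θbar θ θ' : Θ) (hθ : θ ≠ θbar) (hθ' : θ' ≠ θbar)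
    (i : ℕ) (j : Fin q) :
    p θ' * ∑ x ∈ univ.filter
        (fun x : Fin q → Θ => (univ.filter (fun k => x k = θbar)).card = i),
        (if x j = θ then sampleProb p x else 0)
    = p θ * ∑ x ∈ univ.filter
        (fun x : Fin q → Θ => (univ.filter (fun k => x k = θbar)).card = i),
        (if x j = θ' then sampleProb p x else 0) := by
  rw [← Finset.sum_filter, ← Finset.sum_filter, Finset.filter_filter, Finset.filter_filter,
    Finset.mul_sum, Finset.mul_sum]
  refine Finset.sum_nbij' (fun x => Function.update x j θ') (fun x => Function.update x j θ)
    ?_ ?_ ?_ ?_ ?_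
  · intro x hx
    simp only [mem_filter, mem_univ, true_and] at hx ⊢
    refine ⟨?_, Function.update_self _ _ _⟩
    rw [filter_update_eq x j θ' θbar (by rw [hx.2]; exact hθ) hθ']
    exact hx.1
  · intro x hx
    simp only [mem_filter, mem_univ, true_and] at hx ⊢
    refine ⟨?_, Function.update_self _ _ _⟩
    rw [filter_update_eq x j θ θbar (by rw [hx.2]; exact hθ') hθ]
    exact hx.1
  · intro x hx
    simp only [mem_filter, mem_univ, true_and] at hx
    show Function.update (Function.update x j θ') j θ = x
    rw [Function.update_idem, ← hx.2, Function.update_eq_self]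
  · intro x hx
    simp only [mem_filter, mem_univ, true_and] at hx
    show Function.update (Function.update x j θ) j θ' = x
    rw [Function.update_idem, ← hx.2, Function.update_eq_self]
  · intro x hx
    simp only [mem_filter, mem_univ, true_and] at hx
    rw [← hx.2]
    exact sampleProb_update p x j θ'

lemma sum_mul_empDist_eq (p : Θ → ℝ) (θbar θ : Θ) (i : ℕ) :
    ∑ x ∈ univ.filter
        (fun x : Fin q → Θ => (univ.filter (fun k => x k = θbar)).card = i),
        sampleProb p x * empDist x θ
    = (∑ j : Fin q, ∑ x ∈ univ.filter
        (fun x : Fin q → Θ => (univ.filter (fun k => x k = θbar)).card = i),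
        (if x j = θ then sampleProb p x else 0)) / q := by
  have hx : ∀ x : Fin q → Θ, sampleProb p x * empDist x θ
      = (∑ j : Fin q, if x j = θ then sampleProb p x else 0) / q := by
    intro x
    unfold empDist
    rw [Finset.card_filter]
    push_cast
    rw [← mul_div_assoc, Finset.mul_sum]
    congr 1
    exact Finset.sum_congr rfl fun j _ => by split <;> simp
  rw [Finset.sum_congr rfl fun x _ => hx x, ← Finset.sum_div, Finset.sum_comm]

lemma swap_full (p : Θ → ℝ) (θbar θ θ' : Θ) (hθ : θ ≠ θbar) (hθ' : θ' ≠ θbar) (i : ℕ) :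
    p θ' * ∑ x ∈ univ.filter
        (fun x : Fin q → Θ => (univ.filter (fun k => x k = θbar)).card = i),
        sampleProb p x * empDist x θ
    = p θ * ∑ x ∈ univ.filter
        (fun x : Fin q → Θ => (univ.filter (fun k => x k = θbar)).card = i),
        sampleProb p x * empDist x θ' := by
  rw [sum_mul_empDist_eq, sum_mul_empDist_eq, ← mul_div_assoc, ← mul_div_assoc]
  congr 1
  rw [Finset.mul_sum, Finset.mul_sum]
  exact Finset.sum_congr rfl fun j _ => swap_j p θbar θ θ' hθ hθ' i j

lemma sum_empDist (hq : 0 < q) (x : Fin q → Θ) : ∑ θ, empDist x θ = 1 := by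
  unfold empDist
  rw [← Finset.sum_div]
  rw [div_eq_one_iff_eq (by exact_mod_cast hq.ne' : (q : ℝ) ≠ 0), ← Nat.cast_sum]
  norm_cast
  have := Finset.card_eq_sum_card_fiberwise (f := x) (s := univ) (t := univ)
    (fun j _ => mem_univ (x j))
  simpa using this.symm

end Aux

/-- Conditional mean of the empirical distribution is close in L1: conditioning on the event
`γ̃_θ̄ = i/q` (with `|i/q − p*_θ̄| ≤ ε/4` and the event having positive probability), the
conditional expectation of the empirical distribution is within `ε/2` of `p*` in L1 norm. -/
theorem conditional_mean_empirical_close {Θ : Type*} [Fintype Θ] [DecidableEq Θ]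
    (p : Θ → ℝ) (hp0 : ∀ θ, 0 ≤ p θ) (hp1 : ∑ θ, p θ = 1)
    (ε : ℝ) (hε : 0 < ε) (q : ℕ) (hq : 0 < q)
    (θbar : Θ) (i : ℕ) (hi : i ≤ q)
    (hpos : 0 < ∑ x ∈ univ.filter (fun x : Fin q → Θ => empDist x θbar = (i : ℝ) / q),
      sampleProb p x)
    (hclose : |(i : ℝ) / q - p θbar| ≤ ε / 4) :
    ∑ θ, |(∑ x ∈ univ.filter (fun x : Fin q → Θ => empDist x θbar = (i : ℝ) / q),
            sampleProb p x * empDist x θ) /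
          (∑ x ∈ univ.filter (fun x : Fin q → Θ => empDist x θbar = (i : ℝ) / q),
            sampleProb p x) - p θ| ≤ ε / 2 := by
  have hq' : (0 : ℝ) < q := by exact_mod_cast hq
  -- the event set, in the two equivalent forms
  set S : Finset (Fin q → Θ) :=
    univ.filter (fun x : Fin q → Θ => empDist x θbar = (i : ℝ) / q) with hSdef
  have hS : S = univ.filter
      (fun x : Fin q → Θ => (univ.filter (fun k => x k = θbar)).card = i) := by
    rw [hSdef]
    apply Finset.filter_congr
    intro x _
    unfold empDist
    constructor
    · intro h
      have := (div_eq_div_iff hq'.ne' hq'.ne').1 h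
      have := mul_right_cancel₀ hq'.ne' this
      exact_mod_cast this
    · intro h; rw [h]
  set D : ℝ := ∑ x ∈ S, sampleProb p x with hDdef
  have hD : 0 < D := hpos
  set N : Θ → ℝ := fun θ => ∑ x ∈ S, sampleProb p x * empDist x θ with hNdef
  have hmemS : ∀ x ∈ S, empDist x θbar = (i : ℝ) / q := by
    intro x hx
    rw [hSdef] at hx
    exact (Finset.mem_filter.1 hx).2
  -- N θbar = (i/q) * D
  have hNbar : N θbar = ((i : ℝ) / q) * D := by
    rw [hNdef, hDdef, Finset.mul_sum]
    refine Finset.sum_congr rfl fun x hx => ?_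
    rw [hmemS x hx]; ring
  -- ∑ θ, N θ = D
  have hNsum : ∑ θ, N θ = D := by
    rw [hNdef, hDdef, Finset.sum_comm]
    refine Finset.sum_congr rfl fun x _ => ?_
    rw [← Finset.mul_sum, sum_empDist hq, mul_one]
  -- sum over erase
  have hNerase : ∑ θ ∈ univ.erase θbar, N θ = (1 - (i : ℝ) / q) * D := by
    have := Finset.sum_erase_add univ N (mem_univ θbar)
    rw [hNsum, hNbar] at this
    linarith
  set s : ℝ := ∑ θ ∈ univ.erase θbar, p θ with hsdef
  have hs1 : s = 1 - p θbar := by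
    have := Finset.sum_erase_add univ p (mem_univ θbar)
    rw [hp1] at this
    linarith
  have hs0 : 0 ≤ s := Finset.sum_nonneg fun θ _ => hp0 θ
  -- key proportionality
  have hkey : ∀ θ ∈ univ.erase θbar, s * N θ = p θ * ((1 - (i : ℝ) / q) * D) := by
    intro θ hθ
    have hθ' : θ ≠ θbar := Finset.ne_of_mem_erase hθ
    rw [hsdef, Finset.sum_mul, ← hNerase, Finset.mul_sum]
    refine Finset.sum_congr rfl fun θ' hθ'' => ?_
    have h2 : θ' ≠ θbar := Finset.ne_of_mem_erase hθ''
    rw [hNdef, hS]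
    exact swap_full p θbar θ θ' hθ' h2 i
  -- split the goal
  rw [show (∑ θ, |N θ / D - p θ|) = |N θbar / D - p θbar| +
      ∑ θ ∈ univ.erase θbar, |N θ / D - p θ| from
    (Finset.add_sum_erase univ _ (mem_univ θbar)).symm]
  have hterm1 : |N θbar / D - p θbar| ≤ ε / 4 := by
    rw [hNbar, mul_div_cancel_right₀ _ hD.ne']
    exact hclose
  have hterm2 : ∑ θ ∈ univ.erase θbar, |N θ / D - p θ| ≤ ε / 4 := by
    rcases hs0.eq_or_lt with hs | hs
    · -- s = 0 : all other masses vanish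
      have hp00 : ∀ θ ∈ univ.erase θbar, p θ = 0 := by
        intro θ hθ
        have := (Finset.sum_eq_zero_iff_of_nonneg (fun θ _ => hp0 θ)).1 hs.symm
        exact this θ hθ
      have hN0 : ∀ θ ∈ univ.erase θbar, N θ = 0 := by
        intro θ hθ
        rw [hNdef]
        refine Finset.sum_eq_zero fun x _ => ?_
        by_cases hex : ∃ j, x j = θ
        · obtain ⟨j, hj⟩ := hex
          have : sampleProb p x = 0 :=
            Finset.prod_eq_zero (mem_univ j) (by rw [hj]; exact hp00 θ hθ)
          rw [this, zero_mul]
        · have : empDist x θ = 0 := by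
            unfold empDist
            rw [Finset.filter_eq_empty_iff.2 (fun j _ => fun h => hex ⟨j, h⟩)]
            simp
          rw [this, mul_zero]
      calc ∑ θ ∈ univ.erase θbar, |N θ / D - p θ|
          = 0 := Finset.sum_eq_zero fun θ hθ => by
            rw [hN0 θ hθ, hp00 θ hθ, zero_div, sub_zero, abs_zero]
        _ ≤ ε / 4 := by linarith
    · -- s > 0
      have hNval : ∀ θ ∈ univ.erase θbar, N θ / D - p θ
          = p θ * ((1 - (i : ℝ) / q) / s - 1) := by
        intro θ hθ
        have h := hkey θ hθ
        have : N θ = p θ * ((1 - (i : ℝ) / q) * D) / s := by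
          field_simp at h ⊢
          linarith [h]
        rw [this]
        field_simp
      calc ∑ θ ∈ univ.erase θbar, |N θ / D - p θ|
          = ∑ θ ∈ univ.erase θbar, p θ * |(1 - (i : ℝ) / q) / s - 1| := by
            refine Finset.sum_congr rfl fun θ hθ => ?_
            rw [hNval θ hθ, abs_mul, abs_of_nonneg (hp0 θ)]
        _ = s * |(1 - (i : ℝ) / q) / s - 1| := by rw [← Finset.sum_mul]
        _ = |s * ((1 - (i : ℝ) / q) / s - 1)| := by
            rw [abs_mul, abs_of_pos hs]
        _ = |p θbar - (i : ℝ) / q| := by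
            rw [mul_sub, mul_div_cancel₀ _ hs.ne', mul_one, hs1]
            ring_nf
        _ ≤ ε / 4 := by rw [abs_sub_comm]; exact hclose
  linarith
end

section
/- Conditional concentration of posterior utilities: let Θ be a finite set, p* a probability distribution on Θ, u : Θ → [−1,1], ε > 0, α ∈ (0,1], and let q be a positive integer with q ≥ 32·log(4/α)/ε². Let γ̃ be the empirical distribution of q i.i.d. samples from p*. Fix θ̄ ∈ Θ and an integer i with 0 ≤ i ≤ q such that Pr(γ̃_{θ̄} = i/q) > 0 and |i/q − p*_{θ̄}| ≤ ε/4. Then Pr( | Σ_{θ∈Θ} γ̃_θ·u(θ) − Σ_{θ∈Θ} p*_θ·u(θ) | ≤ ε | γ̃_{θ̄} = i/q ) ≥ 1 − α/2. -/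
open Finset

lemma exp_le_cosh_aux (c z : ℝ) (hc : 0 < c) (hz : |z| ≤ c) :
    Real.exp z ≤ Real.cosh c + (z / c) * Real.sinh c := by
  rw [abs_le] at hz
  have hcne : c ≠ 0 := hc.ne'
  have ha : (0:ℝ) ≤ (c - z) / (2*c) := div_nonneg (by linarith) (by linarith)
  have hb : (0:ℝ) ≤ (c + z) / (2*c) := div_nonneg (by linarith) (by linarith)
  have hab : (c - z) / (2*c) + (c + z) / (2*c) = 1 := by field_simp; ring
  have h := convexOn_exp.2 (Set.mem_univ (-c)) (Set.mem_univ c) ha hb hab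
  simp only [smul_eq_mul] at h
  have he : (c - z) / (2*c) * (-c) + (c + z) / (2*c) * c = z := by field_simp; ring
  rw [he] at h
  refine h.trans_eq ?_
  rw [Real.cosh_eq, Real.sinh_eq]
  field_simp
  ring

lemma key_sum {Θ : Type*} [Fintype Θ] [DecidableEq Θ] (θbar : Θ) (g : Θ → ℝ) (q i : ℕ) :
    (∑ x : Fin q → Θ, if (univ.filter fun j => x j = θbar).card = i then ∏ j, g (x j) else 0)
    = (q.choose i : ℝ) * g θbar ^ i * (∑ θ ∈ univ.erase θbar, g θ) ^ (q - i) := by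
  induction q generalizing i with
  | zero =>
    rw [Fintype.sum_unique]
    cases i with
    | zero => simp
    | succ k => simp
  | succ n ih =>
    rw [← Equiv.sum_comp (Fin.consEquiv (fun _ => Θ)), Fintype.sum_prod_type]
    have hterm : ∀ (a : Θ) (y : Fin n → Θ),
        (if (univ.filter fun j => (Fin.consEquiv fun _ => Θ) (a, y) j = θbar).card = i then
          ∏ j : Fin (n+1), g ((Fin.consEquiv fun _ => Θ) (a, y) j) else 0)
        = if (if a = θbar then 1 else 0) + (univ.filter fun j => y j = θbar).card = i then
            g a * ∏ j : Fin n, g (y j) else 0 := by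
      intro a y
      have h1 : (univ.filter fun j => (Fin.consEquiv fun _ => Θ) (a, y) j = θbar).card
          = (if a = θbar then 1 else 0) + (univ.filter fun j => y j = θbar).card := by
        rw [Finset.card_filter, Finset.card_filter, Fin.sum_univ_succ]
        simp [Fin.consEquiv]
      have h2 : (∏ j : Fin (n+1), g ((Fin.consEquiv fun _ => Θ) (a, y) j))
          = g a * ∏ j : Fin n, g (y j) := by
        rw [Fin.prod_univ_succ]
        simp [Fin.consEquiv]
      rw [h1, h2]
    simp only [hterm]
    rw [← Finset.add_sum_erase _ _ (mem_univ θbar)]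
    have herase : ∀ θ ∈ univ.erase θbar,
        (∑ y : Fin n → Θ, if (if θ = θbar then 1 else 0) + (univ.filter fun j => y j = θbar).card = i
          then g θ * ∏ j : Fin n, g (y j) else 0)
        = g θ * ((n.choose i : ℝ) * g θbar ^ i * (∑ θ ∈ univ.erase θbar, g θ) ^ (n - i)) := by
      intro θ hθ
      rw [← ih i, Finset.mul_sum]
      apply Finset.sum_congr rfl
      intro y _
      rw [if_neg (Finset.ne_of_mem_erase hθ), zero_add, mul_ite, mul_zero]
    rw [Finset.sum_congr rfl herase, ← Finset.sum_mul]
    set s : ℝ := ∑ θ ∈ univ.erase θbar, g θ with hs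
    simp only [eq_self_iff_true, if_true]
    cases i with
    | zero =>
      have h0 : (∑ y : Fin n → Θ, if 1 + (univ.filter fun j => y j = θbar).card = 0
          then g θbar * ∏ j : Fin n, g (y j) else 0) = 0 :=
        Finset.sum_eq_zero fun y _ => if_neg (by omega)
      rw [h0, zero_add]
      simp only [Nat.choose_zero_right, Nat.cast_one, pow_zero, one_mul, mul_one, Nat.sub_zero]
      ring
    | succ k =>
      have h1 : (∑ y : Fin n → Θ, if 1 + (univ.filter fun j => y j = θbar).card = k + 1
          then g θbar * ∏ j : Fin n, g (y j) else 0)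
          = g θbar * ((n.choose k : ℝ) * g θbar ^ k * s ^ (n - k)) := by
        rw [← ih k, Finset.mul_sum]
        apply Finset.sum_congr rfl
        intro y _
        rw [mul_ite, mul_zero]
        exact if_congr (by omega) rfl rfl
      rw [h1, Nat.choose_succ_succ, Nat.cast_add, show n + 1 - (k+1) = n - k from by omega]
      rcases Nat.lt_or_ge k n with h | h
      · rw [show n - k = (n - (k+1)) + 1 from by omega]
        ring
      · have hc : n.choose (k+1) = 0 := Nat.choose_eq_zero_of_lt (by omega)
        rw [hc, Nat.cast_zero]
        ring

set_option maxHeartbeats 1000000 in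
lemma one_sided {Θ : Type*} [Fintype Θ] [DecidableEq Θ]
    (p : Θ → ℝ) (hp0 : ∀ θ, 0 ≤ p θ)
    (v : Θ → ℝ) (hv : ∀ θ, |v θ| ≤ 1)
    (ε α : ℝ) (hε : 0 < ε) (hα : α ∈ Set.Ioc (0:ℝ) 1)
    (q : ℕ) (hq : 0 < q) (hq2 : 32 * Real.log (4 / α) / ε ^ 2 ≤ q)
    (θbar : Θ) (i : ℕ) (hi : i ≤ q)
    (hD : 0 < (q.choose i : ℝ) * p θbar ^ i * (∑ θ ∈ univ.erase θbar, p θ) ^ (q - i)) :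
    (∑ x : Fin q → Θ,
      if (univ.filter fun j => x j = θbar).card = i ∧
          ((i : ℝ) * v θbar + ((q:ℝ) - (i:ℝ)) *
            ((∑ θ ∈ univ.erase θbar, p θ * v θ) / (∑ θ ∈ univ.erase θbar, p θ))) / q + ε/2
            ≤ (∑ j, v (x j)) / q
        then sampleProb p x else 0)
    ≤ α/4 * ((q.choose i : ℝ) * p θbar ^ i * (∑ θ ∈ univ.erase θbar, p θ) ^ (q - i)) := by
  have hq' : (0:ℝ) < q := by exact_mod_cast hq
  set s : ℝ := ∑ θ ∈ univ.erase θbar, p θ with hs_def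
  set w : ℝ := ∑ θ ∈ univ.erase θbar, p θ * v θ with hw_def
  set ub : ℝ := w / s with hub_def
  set ν : ℝ := ((i : ℝ) * v θbar + ((q:ℝ) - (i:ℝ)) * ub) / q with hν_def
  set t : ℝ := ε * q / 8 with ht_def
  have ht : 0 < t := by positivity
  have hsnn : 0 ≤ s := Finset.sum_nonneg fun θ _ => hp0 θ
  have hPnn : ∀ x : Fin q → Θ, 0 ≤ sampleProb p x := fun x =>
    Finset.prod_nonneg fun j _ => hp0 (x j)
  -- Step 1: Markov
  have step1 : (∑ x : Fin q → Θ,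
      if (univ.filter fun j => x j = θbar).card = i ∧ ν + ε/2 ≤ (∑ j, v (x j)) / q
        then sampleProb p x else 0)
      ≤ ∑ x : Fin q → Θ,
        if (univ.filter fun j => x j = θbar).card = i
          then sampleProb p x * Real.exp (t * ((∑ j, v (x j)) / q - ν - ε/2)) else 0 := by
    apply Finset.sum_le_sum
    intro x _
    by_cases h1 : (univ.filter fun j => x j = θbar).card = i
    · by_cases h2 : ν + ε/2 ≤ (∑ j, v (x j)) / q
      · rw [if_pos ⟨h1, h2⟩, if_pos h1]
        have : (1:ℝ) ≤ Real.exp (t * ((∑ j, v (x j)) / q - ν - ε/2)) :=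
          Real.one_le_exp (mul_nonneg ht.le (by linarith))
        nlinarith [hPnn x]
      · rw [if_neg (by tauto), if_pos h1]
        exact mul_nonneg (hPnn x) (Real.exp_pos _).le
    · rw [if_neg (by tauto), if_neg h1]
  -- Step 2: factorization
  have step2 : ∀ x : Fin q → Θ,
      sampleProb p x * Real.exp (t * ((∑ j, v (x j)) / q - ν - ε/2))
      = Real.exp (-(t * (ν + ε/2))) * ∏ j, (p (x j) * Real.exp (t * v (x j) / q)) := by
    intro x
    rw [Finset.prod_mul_distrib,
      show t * ((∑ j, v (x j)) / q - ν - ε/2)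
        = (∑ j, t * v (x j) / q) + (-(t * (ν + ε/2))) from by
          rw [show (∑ j, t * v (x j) / q) = t * (∑ j, v (x j)) / q from by
            rw [Finset.mul_sum, Finset.sum_div]]
          ring,
      Real.exp_add, Real.exp_sum]
    unfold sampleProb
    ring
  -- Step 3: apply key identity
  set g : Θ → ℝ := fun θ => p θ * Real.exp (t * v θ / q) with hg_def
  set M : ℝ := ∑ θ ∈ univ.erase θbar, g θ with hM_def
  have step3 : (∑ x : Fin q → Θ,
      if (univ.filter fun j => x j = θbar).card = i
        then sampleProb p x * Real.exp (t * ((∑ j, v (x j)) / q - ν - ε/2)) else 0)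
      = Real.exp (-(t * (ν + ε/2))) *
          ((q.choose i : ℝ) * g θbar ^ i * M ^ (q - i)) := by
    rw [← key_sum θbar g q i, Finset.mul_sum]
    apply Finset.sum_congr rfl
    intro x _
    rw [step2 x, mul_ite, mul_zero]
  -- Step 4
  have step4 : g θbar ^ i = p θbar ^ i * Real.exp ((i:ℝ) * (t * v θbar / q)) := by
    rw [hg_def, mul_pow, Real.exp_nat_mul]
  -- Step 5
  have hMnn : 0 ≤ M := Finset.sum_nonneg fun θ _ => mul_nonneg (hp0 θ) (Real.exp_pos _).le
  have step5 : M ^ (q - i)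
      ≤ s ^ (q - i) * Real.exp (((q:ℝ) - (i:ℝ)) * (t * ub / q + 2 * t^2 / q^2)) := by
    rcases Nat.eq_or_lt_of_le hi with heq | hlt
    · subst heq; simp
    · have hs : 0 < s := by
        rcases hsnn.eq_or_lt with h0 | h0
        · exfalso
          rw [← h0] at hD
          rw [zero_pow (by omega : q - i ≠ 0)] at hD
          simp at hD
        · exact h0
      set c : ℝ := 2 * t / q with hc_def
      have hc : 0 < c := by rw [hc_def]; positivity
      have hub1 : |ub| ≤ 1 := by
        rw [hub_def, abs_div, abs_of_nonneg hsnn, div_le_one hs]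
        calc |w| ≤ ∑ θ ∈ univ.erase θbar, |p θ * v θ| := Finset.abs_sum_le_sum_abs _ _
          _ ≤ ∑ θ ∈ univ.erase θbar, p θ := by
              apply Finset.sum_le_sum
              intro θ _
              rw [abs_mul, abs_of_nonneg (hp0 θ)]
              nlinarith [hv θ, abs_nonneg (v θ), hp0 θ]
      have hθb : ∀ θ ∈ univ.erase θbar, g θ ≤ Real.exp (t * ub / q) *
          (p θ * (Real.cosh c + ((t * (v θ - ub) / q) / c) * Real.sinh c)) := by
        intro θ _
        have hz : |t * (v θ - ub) / q| ≤ c := by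
          rw [hc_def, abs_div, abs_of_nonneg hq'.le, abs_mul, abs_of_nonneg ht.le,
            div_le_div_iff_of_pos_right hq']
          have : |v θ - ub| ≤ 2 := (abs_sub _ _).trans (by linarith [hv θ])
          nlinarith
        have hcz := exp_le_cosh_aux c (t * (v θ - ub) / q) hc hz
        have hexp : Real.exp (t * v θ / q)
            = Real.exp (t * ub / q) * Real.exp (t * (v θ - ub) / q) := by
          rw [← Real.exp_add]; congr 1; field_simp; ring
        calc g θ = p θ * Real.exp (t * v θ / q) := rfl
          _ = Real.exp (t * ub / q) * (p θ * Real.exp (t * (v θ - ub) / q)) := by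
              rw [hexp]; ring
          _ ≤ Real.exp (t * ub / q) *
              (p θ * (Real.cosh c + ((t * (v θ - ub) / q) / c) * Real.sinh c)) := by
              have := mul_le_mul_of_nonneg_left hcz (hp0 θ)
              exact mul_le_mul_of_nonneg_left this (Real.exp_pos _).le
      have hsum : (∑ θ ∈ univ.erase θbar,
          p θ * (Real.cosh c + ((t * (v θ - ub) / q) / c) * Real.sinh c)) = s * Real.cosh c := by
        have e1 : ∀ θ ∈ univ.erase θbar,
            p θ * (Real.cosh c + ((t * (v θ - ub) / q) / c) * Real.sinh c)
            = Real.cosh c * p θ + (t * Real.sinh c / (q * c)) * (p θ * v θ)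
              - ((t * Real.sinh c / (q * c)) * ub) * p θ := by
          intro θ _
          have hcne : c ≠ 0 := hc.ne'
          have hqne : (q:ℝ) ≠ 0 := hq'.ne'
          field_simp
          ring
        rw [Finset.sum_congr rfl e1, Finset.sum_sub_distrib, Finset.sum_add_distrib,
          ← Finset.mul_sum, ← Finset.mul_sum, ← Finset.mul_sum, ← hs_def, ← hw_def]
        have h2 : ub * s = w := div_mul_cancel₀ w hs.ne'
        linear_combination (-(t * Real.sinh c / (q * c))) * h2
      have hM1 : M ≤ s * Real.exp (t * ub / q + 2 * t^2 / q^2) := by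
        have hM2 : M ≤ Real.exp (t * ub / q) * (s * Real.cosh c) := by
          calc M ≤ ∑ θ ∈ univ.erase θbar, Real.exp (t * ub / q) *
                (p θ * (Real.cosh c + ((t * (v θ - ub) / q) / c) * Real.sinh c)) :=
              Finset.sum_le_sum hθb
            _ = Real.exp (t * ub / q) * (s * Real.cosh c) := by
                rw [← Finset.mul_sum, hsum]
        refine hM2.trans ?_
        rw [Real.exp_add]
        have hcsq : Real.cosh c ≤ Real.exp (2 * t^2 / q^2) := by
          have := Real.cosh_le_exp_half_sq c
          rw [show c^2/2 = 2 * t^2 / q^2 from by rw [hc_def]; field_simp] at this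
          exact this
        calc Real.exp (t * ub / q) * (s * Real.cosh c)
            ≤ Real.exp (t * ub / q) * (s * Real.exp (2 * t^2 / q^2)) := by
              have := mul_le_mul_of_nonneg_left hcsq hsnn
              exact mul_le_mul_of_nonneg_left this (Real.exp_pos _).le
          _ = s * (Real.exp (t * ub / q) * Real.exp (2 * t^2 / q^2)) := by ring
      calc M ^ (q - i) ≤ (s * Real.exp (t * ub / q + 2 * t^2 / q^2)) ^ (q - i) :=
          pow_le_pow_left₀ hMnn hM1 _
        _ = s ^ (q - i) * Real.exp (((q - i : ℕ) : ℝ) * (t * ub / q + 2 * t^2 / q^2)) := by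
            rw [mul_pow, Real.exp_nat_mul]
        _ = s ^ (q - i) * Real.exp (((q:ℝ) - (i:ℝ)) * (t * ub / q + 2 * t^2 / q^2)) := by
            rw [Nat.cast_sub hi]
  -- Step 6: exponent bound
  have hEbound : Real.exp (-(t * (ν + ε/2)) + (i:ℝ) * (t * v θbar / q)
      + ((q:ℝ) - (i:ℝ)) * (t * ub / q + 2 * t^2 / q^2)) ≤ α / 4 := by
    have hν2 : (i:ℝ) * (t * v θbar / q) + ((q:ℝ) - (i:ℝ)) * (t * ub / q) = t * ν := by
      rw [hν_def]; field_simp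
    have hm2 : ((q:ℝ) - (i:ℝ)) * (2 * t^2 / q^2) ≤ 2 * t^2 / q := by
      have h1 : ((q:ℝ) - (i:ℝ)) ≤ q := by
        have : (0:ℝ) ≤ (i:ℝ) := Nat.cast_nonneg i
        linarith
      have h2 : (0:ℝ) ≤ 2 * t^2 / q^2 := by positivity
      calc ((q:ℝ) - (i:ℝ)) * (2 * t^2 / q^2) ≤ (q:ℝ) * (2 * t^2 / q^2) :=
          mul_le_mul_of_nonneg_right h1 h2
        _ = 2 * t^2 / q := by field_simp
    have ht2 : -(t * ε / 2) + 2 * t^2 / q = -(ε^2 * q) / 32 := by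
      rw [ht_def]; field_simp; ring
    have expand : -(t * (ν + ε/2)) + (i:ℝ) * (t * v θbar / q)
        + ((q:ℝ) - (i:ℝ)) * (t * ub / q + 2 * t^2 / q^2)
        = -(t * ε / 2) + ((q:ℝ) - (i:ℝ)) * (2 * t^2 / q^2) := by
      linear_combination hν2
    rw [expand]
    have hA : -(t * ε / 2) + ((q:ℝ) - (i:ℝ)) * (2 * t^2 / q^2) ≤ -(ε^2 * q) / 32 := by
      linarith only [hm2, ht2]
    have hαpos : 0 < α := hα.1
    have hlog : Real.log (4 / α) ≤ ε^2 * q / 32 := by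
      have hε2 : (0:ℝ) < ε^2 := by positivity
      have := (div_le_iff₀ hε2).1 hq2
      nlinarith only [this]
    calc Real.exp (-(t * ε / 2) + ((q:ℝ) - (i:ℝ)) * (2 * t^2 / q^2))
        ≤ Real.exp (Real.log (α / 4)) := by
          apply Real.exp_le_exp.2
          rw [show α / 4 = (4 / α)⁻¹ from (inv_div 4 α).symm ▸ rfl, Real.log_inv]
          linarith only [hA, hlog]
      _ = α / 4 := Real.exp_log (by positivity)
  -- Step 7: assemble
  refine step1.trans ?_
  rw [step3, step4]
  have hCnn : (0:ℝ) ≤ (q.choose i : ℝ) * p θbar ^ i :=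
    mul_nonneg (Nat.cast_nonneg _) (pow_nonneg (hp0 θbar) i)
  calc Real.exp (-(t * (ν + ε/2))) *
        ((q.choose i : ℝ) * (p θbar ^ i * Real.exp ((i:ℝ) * (t * v θbar / q))) * M ^ (q - i))
      ≤ Real.exp (-(t * (ν + ε/2))) *
        ((q.choose i : ℝ) * (p θbar ^ i * Real.exp ((i:ℝ) * (t * v θbar / q))) *
          (s ^ (q - i) * Real.exp (((q:ℝ) - (i:ℝ)) * (t * ub / q + 2 * t^2 / q^2)))) := by
        have hnn : (0:ℝ) ≤ Real.exp (-(t * (ν + ε/2))) *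
            ((q.choose i : ℝ) * (p θbar ^ i * Real.exp ((i:ℝ) * (t * v θbar / q)))) :=
          mul_nonneg (Real.exp_pos _).le (mul_nonneg (Nat.cast_nonneg _)
            (mul_nonneg (pow_nonneg (hp0 θbar) i) (Real.exp_pos _).le))
        calc Real.exp (-(t * (ν + ε/2))) *
              ((q.choose i : ℝ) * (p θbar ^ i * Real.exp ((i:ℝ) * (t * v θbar / q))) * M ^ (q - i))
            = (Real.exp (-(t * (ν + ε/2))) *
              ((q.choose i : ℝ) * (p θbar ^ i * Real.exp ((i:ℝ) * (t * v θbar / q))))) * M ^ (q - i) := by ring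
          _ ≤ (Real.exp (-(t * (ν + ε/2))) *
              ((q.choose i : ℝ) * (p θbar ^ i * Real.exp ((i:ℝ) * (t * v θbar / q))))) *
              (s ^ (q - i) * Real.exp (((q:ℝ) - (i:ℝ)) * (t * ub / q + 2 * t^2 / q^2))) :=
            mul_le_mul_of_nonneg_left step5 hnn
          _ = _ := by ring
    _ = ((q.choose i : ℝ) * p θbar ^ i * s ^ (q - i)) *
          Real.exp (-(t * (ν + ε/2)) + (i:ℝ) * (t * v θbar / q)
            + ((q:ℝ) - (i:ℝ)) * (t * ub / q + 2 * t^2 / q^2)) := by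
        rw [Real.exp_add, Real.exp_add]
        ring
    _ ≤ ((q.choose i : ℝ) * p θbar ^ i * s ^ (q - i)) * (α / 4) :=
        mul_le_mul_of_nonneg_left hEbound hD.le
    _ = α / 4 * ((q.choose i : ℝ) * p θbar ^ i * s ^ (q - i)) := by ring

set_option maxHeartbeats 1000000 in
/-- Conditional concentration of posterior utilities: conditioning on the event
`γ̃_θ̄ = i/q` (with `|i/q − p*_θ̄| ≤ ε/4` and the event having positive probability), with
probability at least `1 − α/2` the expected utility under the empirical posterior `γ̃` is
within `ε` of the one under `p*`, provided `q ≥ 32·log(4/α)/ε²`. -/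
theorem conditional_concentration_posterior_utilities {Θ : Type*} [Fintype Θ] [DecidableEq Θ]
    (p : Θ → ℝ) (hp0 : ∀ θ, 0 ≤ p θ) (hp1 : ∑ θ, p θ = 1)
    (u : Θ → ℝ) (hu : ∀ θ, u θ ∈ Set.Icc (-1 : ℝ) 1)
    (ε α : ℝ) (hε : 0 < ε) (hα : α ∈ Set.Ioc (0 : ℝ) 1)
    (q : ℕ) (hq : 0 < q) (hq2 : 32 * Real.log (4 / α) / ε ^ 2 ≤ q)
    (θbar : Θ) (i : ℕ) (hi : i ≤ q)
    (hpos : 0 < ∑ x ∈ univ.filter (fun x : Fin q → Θ => empDist x θbar = (i : ℝ) / q),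
      sampleProb p x)
    (hclose : |(i : ℝ) / q - p θbar| ≤ ε / 4) :
    1 - α / 2 ≤
      (∑ x ∈ univ.filter (fun x : Fin q → Θ => empDist x θbar = (i : ℝ) / q ∧
          |∑ θ, empDist x θ * u θ - ∑ θ, p θ * u θ| ≤ ε), sampleProb p x) /
      (∑ x ∈ univ.filter (fun x : Fin q → Θ => empDist x θbar = (i : ℝ) / q),
        sampleProb p x) := by
  have hq' : (0:ℝ) < q := by exact_mod_cast hq
  have hu' : ∀ θ, |u θ| ≤ 1 := fun θ => abs_le.2 ⟨(hu θ).1, (hu θ).2⟩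
  have hPnn : ∀ x : Fin q → Θ, 0 ≤ sampleProb p x := fun x =>
    Finset.prod_nonneg fun j _ => hp0 (x j)
  have hiff : ∀ x : Fin q → Θ, (empDist x θbar = (i:ℝ)/q)
      ↔ ((univ.filter fun j => x j = θbar).card = i) := by
    intro x
    unfold empDist
    constructor
    · intro h
      exact_mod_cast mul_right_cancel₀ hq'.ne' ((div_eq_div_iff hq'.ne' hq'.ne').1 h)
    · intro h
      rw [h]
  have hf : ∀ x : Fin q → Θ, (∑ θ, empDist x θ * u θ) = (∑ j, u (x j))/q := by
    intro x
    unfold empDist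
    have h1 : ∀ θ : Θ, ((univ.filter fun j => x j = θ).card : ℝ)
        = ∑ j, if x j = θ then (1:ℝ) else 0 := by
      intro θ
      rw [Finset.card_filter]
      push_cast
      rfl
    have h2 : ∀ θ : Θ, ((univ.filter fun j => x j = θ).card : ℝ)/q * u θ
        = (∑ j, if x j = θ then u θ else 0)/q := by
      intro θ
      rw [h1 θ, div_mul_eq_mul_div, Finset.sum_mul]
      congr 1
      apply Finset.sum_congr rfl
      intro j _
      rw [ite_mul, one_mul, zero_mul]
    rw [Finset.sum_congr rfl (fun θ _ => h2 θ), ← Finset.sum_div, Finset.sum_comm]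
    congr 1
    apply Finset.sum_congr rfl
    intro j _
    simp
  set s : ℝ := ∑ θ ∈ univ.erase θbar, p θ with hs_def
  have hsnn : 0 ≤ s := Finset.sum_nonneg fun θ _ => hp0 θ
  set w : ℝ := ∑ θ ∈ univ.erase θbar, p θ * u θ with hw_def
  set ub : ℝ := w / s with hub_def
  set ν : ℝ := ((i:ℝ) * u θbar + ((q:ℝ) - (i:ℝ)) * ub) / q with hν_def
  set μ : ℝ := ∑ θ, p θ * u θ with hμ_def
  -- rewrite denominator and numerator
  have hDrw : (∑ x ∈ univ.filter (fun x : Fin q → Θ => empDist x θbar = (i:ℝ)/q), sampleProb p x)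
      = ∑ x : Fin q → Θ,
          if (univ.filter fun j => x j = θbar).card = i then sampleProb p x else 0 := by
    rw [Finset.filter_congr (fun x _ => hiff x), Finset.sum_filter]
  have hNrw : (∑ x ∈ univ.filter (fun x : Fin q → Θ => empDist x θbar = (i:ℝ)/q ∧
        |∑ θ, empDist x θ * u θ - μ| ≤ ε), sampleProb p x)
      = ∑ x : Fin q → Θ,
          if (univ.filter fun j => x j = θbar).card = i ∧ |(∑ j, u (x j))/q - μ| ≤ ε
            then sampleProb p x else 0 := by
    rw [Finset.filter_congr (fun x _ => and_congr (hiff x) (by rw [hf x])), Finset.sum_filter]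
  have hDval : (∑ x : Fin q → Θ,
      if (univ.filter fun j => x j = θbar).card = i then sampleProb p x else 0)
      = (q.choose i : ℝ) * p θbar ^ i * s ^ (q - i) := key_sum θbar p q i
  rw [hDrw] at hpos
  have hD : 0 < (q.choose i : ℝ) * p θbar ^ i * s ^ (q - i) := hDval ▸ hpos
  have hsum1 : p θbar + s = 1 := by rw [hs_def]; rw [Finset.add_sum_erase _ _ (mem_univ θbar)]; exact hp1
  have hμw : μ = p θbar * u θbar + w := by
    rw [hμ_def, hw_def, ← Finset.add_sum_erase _ _ (mem_univ θbar)]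
  -- |ν - μ| ≤ ε/2
  have habs : |ν - μ| ≤ ε/2 := by
    rcases hsnn.eq_or_lt with h0 | hs
    · have hiq : i = q := by
        by_contra hne
        rw [← h0, zero_pow (by omega : q - i ≠ 0)] at hD
        simp at hD
      have hperase : ∀ θ ∈ univ.erase θbar, p θ = 0 := by
        intro θ hθ
        have := (Finset.sum_eq_zero_iff_of_nonneg (fun θ _ => hp0 θ)).1 h0.symm
        exact this θ hθ
      have hw0 : w = 0 := Finset.sum_eq_zero fun θ hθ => by rw [hperase θ hθ, zero_mul]
      have hub0 : ub = 0 := by rw [hub_def, hw0, zero_div]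
      have hp1' : p θbar = 1 := by linarith
      have hν' : ν = u θbar := by
        rw [hν_def, hub0, hiq]
        field_simp
        ring
      rw [hν', hμw, hw0, hp1']
      simp
      linarith
    · have hw : ub * s = w := div_mul_cancel₀ w hs.ne'
      have hs' : s ≠ 0 := hs.ne'
      have hq'' : (q:ℝ) ≠ 0 := hq'.ne'
      have hkey : ν - μ = ((i:ℝ)/q - p θbar) * (u θbar - ub) := by
        rw [hν_def, hμw, ← hw, show p θbar = 1 - s from by linarith]
        field_simp
        ring
      rw [hkey, abs_mul]
      have hub1 : |ub| ≤ 1 := by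
        rw [hub_def, abs_div, abs_of_nonneg hsnn, div_le_one hs]
        calc |w| ≤ ∑ θ ∈ univ.erase θbar, |p θ * u θ| := by
              rw [hw_def]; exact Finset.abs_sum_le_sum_abs _ _
          _ ≤ ∑ θ ∈ univ.erase θbar, p θ := by
              apply Finset.sum_le_sum
              intro θ _
              rw [abs_mul, abs_of_nonneg (hp0 θ)]
              nlinarith [hu' θ, abs_nonneg (u θ), hp0 θ]
      have h2 : |u θbar - ub| ≤ 2 := (abs_sub _ _).trans (by linarith [hu' θbar])
      calc |(i:ℝ)/q - p θbar| * |u θbar - ub| ≤ (ε/4) * 2 :=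
          mul_le_mul hclose h2 (abs_nonneg _) (by linarith)
        _ = ε/2 := by ring
  -- the two one-sided bounds
  have bad1 : (∑ x : Fin q → Θ,
      if (univ.filter fun j => x j = θbar).card = i ∧ ν + ε/2 ≤ (∑ j, u (x j))/q
        then sampleProb p x else 0)
      ≤ α/4 * ((q.choose i : ℝ) * p θbar ^ i * s ^ (q - i)) :=
    one_sided p hp0 u hu' ε α hε hα q hq hq2 θbar i hi hD
  have hw2 : (∑ θ ∈ univ.erase θbar, p θ * -u θ) = -w := by
    rw [hw_def, ← Finset.sum_neg_distrib]
    apply Finset.sum_congr rfl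
    intros
    ring
  have bad2raw := one_sided p hp0 (fun θ => -u θ) (fun θ => by rw [abs_neg]; exact hu' θ)
    ε α hε hα q hq hq2 θbar i hi hD
  have bad2 : (∑ x : Fin q → Θ,
      if (univ.filter fun j => x j = θbar).card = i ∧ (∑ j, u (x j))/q ≤ ν - ε/2
        then sampleProb p x else 0)
      ≤ α/4 * ((q.choose i : ℝ) * p θbar ^ i * s ^ (q - i)) := by
    refine le_trans (le_of_eq (Finset.sum_congr rfl fun x _ => ?_)) bad2raw
    refine if_congr (and_congr_right fun _ => ?_) rfl rfl
    have e1 : (∑ j, -u (x j)) = -(∑ j, u (x j)) := by simp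
    have e2 : ((i:ℝ) * -u θbar + ((q:ℝ) - (i:ℝ)) * ((∑ θ ∈ univ.erase θbar, p θ * -u θ)/s))/q
        = -ν := by
      rw [hw2, neg_div s w, ← hub_def, hν_def]
      ring
    show (∑ j, u (x j))/q ≤ ν - ε/2 ↔ _
    rw [e1, e2, neg_div]
    constructor <;> intro <;> linarith
  -- final combination
  rw [hNrw, hDrw, hDval]
  rw [le_div_iff₀ hD]
  have hsplit : (∑ x : Fin q → Θ,
        if (univ.filter fun j => x j = θbar).card = i then sampleProb p x else 0)
      - (∑ x : Fin q → Θ,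
        if (univ.filter fun j => x j = θbar).card = i ∧ |(∑ j, u (x j))/q - μ| ≤ ε
          then sampleProb p x else 0)
      ≤ (∑ x : Fin q → Θ,
          if (univ.filter fun j => x j = θbar).card = i ∧ ν + ε/2 ≤ (∑ j, u (x j))/q
            then sampleProb p x else 0)
        + (∑ x : Fin q → Θ,
          if (univ.filter fun j => x j = θbar).card = i ∧ (∑ j, u (x j))/q ≤ ν - ε/2
            then sampleProb p x else 0) := by
    rw [← Finset.sum_sub_distrib, ← Finset.sum_add_distrib]
    apply Finset.sum_le_sum
    intro x _
    by_cases h1 : (univ.filter fun j => x j = θbar).card = i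
    · by_cases h2 : |(∑ j, u (x j))/q - μ| ≤ ε
      · rw [if_pos h1, if_pos ⟨h1, h2⟩, sub_self]
        have n1 : (0:ℝ) ≤ if (univ.filter fun j => x j = θbar).card = i
            ∧ ν + ε/2 ≤ (∑ j, u (x j))/q then sampleProb p x else 0 := by
          split_ifs
          exacts [hPnn x, le_rfl]
        have n2 : (0:ℝ) ≤ if (univ.filter fun j => x j = θbar).card = i
            ∧ (∑ j, u (x j))/q ≤ ν - ε/2 then sampleProb p x else 0 := by
          split_ifs
          exacts [hPnn x, le_rfl]
        linarith
      · rw [if_pos h1, if_neg (by tauto)]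
        have hcases : ν + ε/2 ≤ (∑ j, u (x j))/q ∨ (∑ j, u (x j))/q ≤ ν - ε/2 := by
          rw [not_le] at h2
          rcases lt_abs.1 h2 with h3 | h3
          · left
            have := abs_le.1 habs
            linarith
          · right
            have := abs_le.1 habs
            linarith
        rcases hcases with h3 | h3
        · have hc : (univ.filter fun j => x j = θbar).card = i
              ∧ ν + ε/2 ≤ (∑ j, u (x j))/q := ⟨h1, h3⟩
          rw [sub_zero, if_pos hc]
          have hnn : (0:ℝ) ≤ if (univ.filter fun j => x j = θbar).card = i
              ∧ (∑ j, u (x j))/q ≤ ν - ε/2 then sampleProb p x else 0 := by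
            split_ifs
            exacts [hPnn x, le_rfl]
          linarith
        · have hc : (univ.filter fun j => x j = θbar).card = i
              ∧ (∑ j, u (x j))/q ≤ ν - ε/2 := ⟨h1, h3⟩
          rw [sub_zero, if_pos hc]
          have hnn : (0:ℝ) ≤ if (univ.filter fun j => x j = θbar).card = i
              ∧ ν + ε/2 ≤ (∑ j, u (x j))/q then sampleProb p x else 0 := by
            split_ifs
            exacts [hPnn x, le_rfl]
          linarith
    · have c1 : ¬((univ.filter fun j => x j = θbar).card = i
          ∧ |(∑ j, u (x j))/q - μ| ≤ ε) := fun h => h1 h.1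
      have c2 : ¬((univ.filter fun j => x j = θbar).card = i
          ∧ ν + ε/2 ≤ (∑ j, u (x j))/q) := fun h => h1 h.1
      have c3 : ¬((univ.filter fun j => x j = θbar).card = i
          ∧ (∑ j, u (x j))/q ≤ ν - ε/2) := fun h => h1 h.1
      rw [if_neg h1, if_neg c1, if_neg c2, if_neg c3]
      norm_num
  have hα1 : 0 < α := hα.1
  rw [hDval] at hsplit
  linarith [hsplit, bad1, bad2]
end

section
/- Decomposition into q-uniform posteriors (general bound): let Θ be a finite state set, R a finite set of receivers with net utilities u_r : Θ → [−1,1], and let g = {g_θ} and h = {h_θ} be families of functions g_θ, h_θ : {c0,c1}^R → [0,1] such that g_θ is β-stable compared with h_θ for every θ ∈ Θ, for some β > 0. Let ε > 0, η ∈ (0,1], and let q be a positive integer with q ≥ 32·log(4/(η·min{1, 1/β}))/ε². Then for every posterior p* ∈ Δ(Θ) there exists a probability distribution γ supported on the set 𝒬 of q-uniform posteriors with Σ_{p∈𝒬} γ_p·p = p* and Σ_{p∈𝒬} γ_p · max_{c ∈ F_ε(p)} Σ_{θ} p_θ·g_θ(c) ≥ (1−η) · max_{c ∈ F(p*)} Σ_{θ}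 p*_θ·h_θ(c). -/
open Finset

private lemma exp_quad {y : ℝ} (hy : |y| ≤ 1) : Real.exp y ≤ 1 + y + y ^ 2 := by
  have h := Real.exp_bound hy (by norm_num : 0 < 2)
  have h2 : ∑ m ∈ range 2, y ^ m / m.factorial = 1 + y := by
    simp [Finset.sum_range_succ]
  rw [h2] at h
  have h3 : |y| ^ 2 = y ^ 2 := sq_abs y
  have h4 := (abs_sub_le_iff.mp h).1
  rw [h3] at h4
  have h5 : (((2:ℕ).succ : ℝ) / ((2:ℕ).factorial * (2:ℕ))) = 3/4 := by
    norm_num [Nat.factorial]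
  rw [h5] at h4
  nlinarith [sq_nonneg y]

private lemma mgf_bound {Θ : Type*} [Fintype Θ] (w f : Θ → ℝ) (hw0 : ∀ θ, 0 ≤ w θ)
    (hw1 : ∑ θ, w θ = 1) (hf : ∀ θ, |f θ| ≤ 2) (hmean : ∑ θ, w θ * f θ = 0)
    {t : ℝ} (ht : |t| ≤ 1/2) :
    ∑ θ, w θ * Real.exp (t * f θ) ≤ Real.exp (4 * t ^ 2) := by
  have step : ∀ θ, w θ * Real.exp (t * f θ) ≤ w θ * (1 + t * f θ + 4 * t ^ 2) := by
    intro θ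
    apply mul_le_mul_of_nonneg_left _ (hw0 θ)
    have h1 : |t * f θ| ≤ 1 := by
      rw [abs_mul]
      calc |t| * |f θ| ≤ (1/2) * 2 :=
            mul_le_mul ht (hf θ) (abs_nonneg _) (by norm_num)
        _ = 1 := by norm_num
    have h2 := exp_quad h1
    have h3 : (t * f θ) ^ 2 ≤ 4 * t ^ 2 := by
      have hf4 : f θ ^ 2 ≤ 4 := by
        have := abs_le.mp (hf θ); nlinarith
      have := mul_le_mul_of_nonneg_left hf4 (sq_nonneg t)
      calc (t * f θ) ^ 2 = t ^ 2 * f θ ^ 2 := by ring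
        _ ≤ t ^ 2 * 4 := this
        _ = 4 * t ^ 2 := by ring
    linarith
  calc ∑ θ, w θ * Real.exp (t * f θ) ≤ ∑ θ, w θ * (1 + t * f θ + 4 * t ^ 2) :=
        Finset.sum_le_sum fun θ _ => step θ
    _ = (∑ θ, w θ) + t * (∑ θ, w θ * f θ) + 4 * t ^ 2 * (∑ θ, w θ) := by
        rw [Finset.mul_sum, Finset.mul_sum, ← Finset.sum_add_distrib, ← Finset.sum_add_distrib]
        exact Finset.sum_congr rfl fun θ _ => by ring
    _ = 1 + 4 * t ^ 2 := by rw [hw1, hmean]; ring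
    _ ≤ Real.exp (4 * t ^ 2) := by linarith [Real.add_one_le_exp (4 * t ^ 2)]

private lemma key_est {Θ ι : Type*} [Fintype Θ] [Fintype ι] [DecidableEq ι] [DecidableEq Θ]
    (w f : Θ → ℝ) (hw0 : ∀ θ, 0 ≤ w θ) (hw1 : ∑ θ, w θ = 1) (hf : ∀ θ, |f θ| ≤ 2)
    (hmean : ∑ θ, w θ * f θ = 0) (i : ι) (θ0 : Θ) {t : ℝ} (ht0 : 0 ≤ t) (ht : |t| ≤ 1/2)
    (s : ℝ) :
    ∑ ω : ι → Θ, (∏ j, w (ω j)) * ((if ω i = θ0 then (1:ℝ) else 0) *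
      (if s ≤ ∑ j, f (ω j) then (1:ℝ) else 0)) ≤
    w θ0 * Real.exp (2*t + 4 * Fintype.card ι * t^2 - t * s) := by
  set G : ι → Θ → ℝ := fun j x =>
    (if j = i then (if x = θ0 then w x else 0) else w x) * Real.exp (t * f x) with hG
  have hG0 : ∀ j x, 0 ≤ G j x := by
    intro j x
    apply mul_nonneg _ (Real.exp_pos _).le
    split_ifs <;> simp [hw0]
  -- pointwise bound
  have hpt : ∀ ω : ι → Θ, (∏ j, w (ω j)) * ((if ω i = θ0 then (1:ℝ) else 0) *
      (if s ≤ ∑ j, f (ω j) then (1:ℝ) else 0)) ≤ (∏ j, G j (ω j)) * Real.exp (-(t*s)) := by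
    intro ω
    by_cases h1 : ω i = θ0
    · by_cases h2 : s ≤ ∑ j, f (ω j)
      · rw [if_pos h1, if_pos h2]
        have hGsplit : ∏ j, G j (ω j) = (∏ j, w (ω j)) * Real.exp (t * ∑ j, f (ω j)) := by
          have : ∀ j, G j (ω j) = w (ω j) * Real.exp (t * f (ω j)) := by
            intro j
            by_cases hj : j = i
            · subst hj; simp only [hG, if_true, h1, ite_self, eq_self_iff_true, if_pos rfl]
            · simp only [hG, if_neg hj]
          rw [Finset.prod_congr rfl fun j _ => this j, Finset.prod_mul_distrib,
            ← Real.exp_sum, Finset.mul_sum]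
        rw [hGsplit]
        have hfac : (1:ℝ) ≤ Real.exp (t * ∑ j, f (ω j)) * Real.exp (-(t*s)) := by
          rw [← Real.exp_add]
          have : 0 ≤ t * ∑ j, f (ω j) + -(t*s) := by
            have := mul_le_mul_of_nonneg_left h2 ht0
            linarith
          calc (1:ℝ) = Real.exp 0 := Real.exp_zero.symm
            _ ≤ _ := Real.exp_le_exp.mpr this
        have hprod0 : 0 ≤ ∏ j, w (ω j) := Finset.prod_nonneg fun j _ => hw0 _
        calc (∏ j, w (ω j)) * (1 * 1) = (∏ j, w (ω j)) * 1 := by ring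
          _ ≤ (∏ j, w (ω j)) * (Real.exp (t * ∑ j, f (ω j)) * Real.exp (-(t*s))) :=
              mul_le_mul_of_nonneg_left hfac hprod0
          _ = (∏ j, w (ω j)) * Real.exp (t * ∑ j, f (ω j)) * Real.exp (-(t*s)) := by ring
      · rw [if_neg h2]
        have : 0 ≤ (∏ j, G j (ω j)) * Real.exp (-(t*s)) :=
          mul_nonneg (Finset.prod_nonneg fun j _ => hG0 j _) (Real.exp_pos _).le
        simpa using this
    · rw [if_neg h1]
      have : 0 ≤ (∏ j, G j (ω j)) * Real.exp (-(t*s)) :=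
        mul_nonneg (Finset.prod_nonneg fun j _ => hG0 j _) (Real.exp_pos _).le
      simpa using this
  -- sum the pointwise bound
  have hsum : ∑ ω : ι → Θ, (∏ j, G j (ω j)) = ∏ j, ∑ x, G j x := by
    have h := Finset.prod_univ_sum (fun _ : ι => (univ : Finset Θ)) (fun j x => G j x)
    rw [Fintype.piFinset_univ] at h
    exact h.symm
  have hGi : ∑ x, G i x = w θ0 * Real.exp (t * f θ0) := by
    have hGix : ∀ x, G i x = if x = θ0 then w x * Real.exp (t * f x) else 0 := by
      intro x
      simp only [hG, if_true, eq_self_iff_true, if_pos rfl]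
      split_ifs <;> simp
    rw [Finset.sum_congr rfl fun x _ => hGix x]
    exact (Finset.sum_ite_eq' univ θ0 (fun x => w x * Real.exp (t * f x))).trans
      (if_pos (mem_univ θ0))
  have hM : ∀ j, j ≠ i → ∑ x, G j x = ∑ x, w x * Real.exp (t * f x) := by
    intro j hj
    simp only [hG, if_neg hj]
  have hM0 : 0 ≤ ∑ x, w x * Real.exp (t * f x) :=
    Finset.sum_nonneg fun x _ => mul_nonneg (hw0 x) (Real.exp_pos _).le
  have hMle : ∑ x, w x * Real.exp (t * f x) ≤ Real.exp (4 * t ^ 2) :=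
    mgf_bound w f hw0 hw1 hf hmean ht
  have hprod : ∏ j, ∑ x, G j x ≤ (w θ0 * Real.exp (t * f θ0)) * Real.exp (4 * t ^ 2) ^ (Fintype.card ι - 1) := by
    rw [← Finset.mul_prod_erase univ _ (mem_univ i), hGi]
    have hcard : (univ.erase i).card = Fintype.card ι - 1 := by
      rw [Finset.card_erase_of_mem (mem_univ i), Finset.card_univ]
    have : ∏ j ∈ univ.erase i, ∑ x, G j x ≤ Real.exp (4 * t ^ 2) ^ (Fintype.card ι - 1) := by
      rw [← hcard, ← Finset.prod_const]
      apply Finset.prod_le_prod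
      · intro j hj; rw [hM j (Finset.ne_of_mem_erase hj)]; exact hM0
      · intro j hj; rw [hM j (Finset.ne_of_mem_erase hj)]; exact hMle
    exact mul_le_mul_of_nonneg_left this (mul_nonneg (hw0 θ0) (Real.exp_pos _).le)
  -- combine
  calc ∑ ω : ι → Θ, (∏ j, w (ω j)) * ((if ω i = θ0 then (1:ℝ) else 0) *
        (if s ≤ ∑ j, f (ω j) then (1:ℝ) else 0))
      ≤ ∑ ω : ι → Θ, (∏ j, G j (ω j)) * Real.exp (-(t*s)) := Finset.sum_le_sum fun ω _ => hpt ω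
    _ = (∏ j, ∑ x, G j x) * Real.exp (-(t*s)) := by rw [← Finset.sum_mul, hsum]
    _ ≤ ((w θ0 * Real.exp (t * f θ0)) * Real.exp (4 * t ^ 2) ^ (Fintype.card ι - 1)) * Real.exp (-(t*s)) :=
        mul_le_mul_of_nonneg_right hprod (Real.exp_pos _).le
    _ ≤ w θ0 * Real.exp (2*t + 4 * Fintype.card ι * t^2 - t * s) := by
        rw [← Real.exp_nat_mul]
        have h1 : Real.exp (t * f θ0) ≤ Real.exp (2*t) := by
          apply Real.exp_le_exp.mpr
          have := (abs_le.mp (hf θ0)).2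
          calc t * f θ0 ≤ t * 2 := mul_le_mul_of_nonneg_left this ht0
            _ = 2*t := by ring
        have h2 : Real.exp (((Fintype.card ι - 1 : ℕ) : ℝ) * (4 * t ^ 2)) ≤
            Real.exp ((Fintype.card ι : ℝ) * (4 * t ^ 2)) := by
          apply Real.exp_le_exp.mpr
          apply mul_le_mul_of_nonneg_right _ (by positivity)
          exact Nat.cast_le.mpr (Nat.sub_le _ _)
        calc w θ0 * Real.exp (t * f θ0) * Real.exp (((Fintype.card ι - 1 : ℕ) : ℝ) * (4 * t ^ 2)) * Real.exp (-(t*s))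
            ≤ w θ0 * Real.exp (2*t) * Real.exp ((Fintype.card ι : ℝ) * (4 * t ^ 2)) * Real.exp (-(t*s)) := by
              apply mul_le_mul_of_nonneg_right _ (Real.exp_pos _).le
              apply mul_le_mul (mul_le_mul_of_nonneg_left h1 (hw0 θ0)) h2 (Real.exp_pos _).le
              exact mul_nonneg (hw0 θ0) (Real.exp_pos _).le
          _ = w θ0 * Real.exp (2*t + 4 * Fintype.card ι * t^2 - t * s) := by
              rw [show (2*t + 4 * (Fintype.card ι : ℝ) * t^2 - t * s)
                  = 2*t + ((Fintype.card ι : ℝ) * (4 * t^2) + -(t*s)) by ring,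
                Real.exp_add, Real.exp_add]
              ring

/-- The persuasive feasible set `F(p)`: profiles where every receiver with strictly positive
expected net utility votes `c0` (`true`) and every receiver with strictly negative expected
net utility votes `c1` (`false`). -/
def Fpers {Θ R : Type*} [Fintype Θ] (u : R → Θ → ℝ) (p : Θ → ℝ) : Set (R → Bool) :=
  {c | (∀ r, 0 < ∑ θ, p θ * u r θ → c r = true) ∧
       (∀ r, ∑ θ, p θ * u r θ < 0 → c r = false)}

/-- The `ε`-persuasive feasible set `F_ε(p)`. -/
def Feps {Θ R : Type*} [Fintype Θ] (u : R → Θ → ℝ) (ε : ℝ) (p : Θ → ℝ) : Set (R → Bool) :=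
  {c | (∀ r, ε < ∑ θ, p θ * u r θ → c r = true) ∧
       (∀ r, ∑ θ, p θ * u r θ < -ε → c r = false)}

set_option maxHeartbeats 1000000 in
/-- Decomposition into `q`-uniform posteriors (general bound): if `g_θ` is `β`-stable
compared with `h_θ` for every state `θ` and `q ≥ 32·log(4/(η·min{1,1/β}))/ε²`, then every
posterior `p*` decomposes as a convex combination of `q`-uniform posteriors whose expected
`ε`-persuasive `g`-value is at least `(1−η)` times the persuasive `h`-value at `p*`. -/
theorem decomposition_q_uniform_general {Θ R : Type*} [Fintype Θ] [Fintype R] [DecidableEq R]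
    (u : R → Θ → ℝ) (hu : ∀ r θ, u r θ ∈ Set.Icc (-1 : ℝ) 1)
    (g h : Θ → (R → Bool) → ℝ)
    (hg01 : ∀ θ c, g θ c ∈ Set.Icc (0 : ℝ) 1) (hh01 : ∀ θ c, h θ c ∈ Set.Icc (0 : ℝ) 1)
    (β : ℝ) (hβ : 0 < β)
    (hstab : ∀ θ (c : R → Bool) (α : ℝ), α ∈ Set.Ioc (0 : ℝ) 1 →
      ∀ y : (R → Bool) → ℝ, (∀ c', 0 ≤ y c') → (∑ c', y c' = 1) →
        (∀ r : R, ∑ c' ∈ univ.filter (fun c' : R → Bool => c' r ≠ c r), y c' ≤ α) →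
        h θ c * (1 - α * β) ≤ ∑ c', y c' * g θ c')
    (ε η : ℝ) (hε : 0 < ε) (hη : η ∈ Set.Ioc (0 : ℝ) 1)
    (q : ℕ) (hq : 0 < q)
    (hq2 : 32 * Real.log (4 / (η * min 1 (1 / β))) / ε ^ 2 ≤ q)
    (pstar : Θ → ℝ) (hps0 : ∀ θ, 0 ≤ pstar θ) (hps1 : ∑ θ, pstar θ = 1) :
    ∃ (S : Finset (Θ → ℝ)) (γ : (Θ → ℝ) → ℝ),
      (∀ p ∈ S, (∀ θ, 0 ≤ p θ) ∧ (∑ θ, p θ = 1) ∧ (∀ θ, ∃ n : ℕ, p θ = (n : ℝ) / q)) ∧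
      (∀ p ∈ S, 0 ≤ γ p) ∧ (∑ p ∈ S, γ p = 1) ∧
      (∀ θ, ∑ p ∈ S, γ p * p θ = pstar θ) ∧
      (1 - η) * sSup ((fun c => ∑ θ, pstar θ * h θ c) '' Fpers u pstar) ≤
        ∑ p ∈ S, γ p * sSup ((fun c => ∑ θ, p θ * g θ c) '' Feps u ε p) := by
  classical
  obtain ⟨hη0, hη1⟩ := hη
  -- constants
  set α : ℝ := η * min 1 (1/β) with hα_def
  have hmin0 : 0 < min 1 (1/β) := lt_min one_pos (by positivity)
  have hmin1 : min 1 (1/β) ≤ 1 := min_le_left _ _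
  have hα0 : 0 < α := mul_pos hη0 hmin0
  have hα1 : α ≤ 1 := by
    calc α ≤ 1 * 1 := mul_le_mul hη1 hmin1 hmin0.le (by norm_num)
      _ = 1 := one_mul 1
  have hαβ : α * β ≤ η := by
    have hmb : min 1 (1/β) * β ≤ 1 := by
      calc min 1 (1/β) * β ≤ (1/β) * β := mul_le_mul_of_nonneg_right (min_le_right _ _) hβ.le
        _ = 1 := by field_simp
    calc α * β = η * (min 1 (1/β) * β) := by ring
      _ ≤ η * 1 := mul_le_mul_of_nonneg_left hmb hη0.le
      _ = η := mul_one η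
  set L : ℝ := Real.log (4 / α) with hL_def
  have h4α : (4:ℝ) ≤ 4 / α := by
    rw [le_div_iff₀ hα0]; nlinarith
  have hL1 : 1 ≤ L := by
    rw [hL_def, Real.le_log_iff_exp_le (by linarith)]
    calc Real.exp 1 ≤ 2.7182818286 := Real.exp_one_lt_d9.le
      _ ≤ 4 := by norm_num
      _ ≤ 4/α := h4α
  have hqe2 : 32 * L ≤ q * ε^2 := by
    have h1 : 32 * L / ε^2 ≤ q := hq2
    calc 32*L = (32*L/ε^2)*ε^2 := by field_simp
      _ ≤ q * ε^2 := mul_le_mul_of_nonneg_right h1 (sq_nonneg ε)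
  have hexpL : Real.exp (-L) = α / 4 := by
    rw [hL_def, ← Real.log_inv, Real.exp_log (by positivity), inv_div]
  -- sample space
  set P : (Fin q → Θ) → ℝ := fun ω => ∏ i, pstar (ω i) with hP_def
  have hP0 : ∀ ω, 0 ≤ P ω := fun ω => Finset.prod_nonneg fun i _ => hps0 _
  have hP1 : ∑ ω : Fin q → Θ, P ω = 1 := by
    have hpu := Finset.prod_univ_sum (fun _ : Fin q => (univ : Finset Θ)) (fun _ θ => pstar θ)
    rw [Fintype.piFinset_univ] at hpu
    calc ∑ ω : Fin q → Θ, P ω = ∏ _i : Fin q, ∑ θ, pstar θ := hpu.symm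
      _ = ∏ _i : Fin q, (1:ℝ) := by rw [hps1]
      _ = 1 := Finset.prod_const_one
  set emp : (Fin q → Θ) → Θ → ℝ := fun ω θ => (∑ i, if ω i = θ then (1:ℝ) else 0) / q
    with hemp_def
  have hq0 : (0:ℝ) < q := by exact_mod_cast hq
  have hemp0 : ∀ ω θ, 0 ≤ emp ω θ := by
    intro ω θ
    apply div_nonneg _ hq0.le
    apply Finset.sum_nonneg
    intro i _; split_ifs <;> norm_num
  have hempsum : ∀ ω, ∑ θ, emp ω θ = 1 := by
    intro ω
    rw [← Finset.sum_div]
    rw [Finset.sum_comm]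
    have : ∀ i : Fin q, ∑ θ, (if ω i = θ then (1:ℝ) else 0) = 1 := by
      intro i
      rw [Finset.sum_ite_eq univ (ω i) (fun _ => (1:ℝ))]
      exact if_pos (mem_univ _)
    rw [Finset.sum_congr rfl fun i _ => this i, Finset.sum_const, Finset.card_univ,
      Fintype.card_fin, nsmul_eq_mul, mul_one, div_self hq0.ne']
  -- point mass identity
  have hpoint : ∀ (i : Fin q) (θ0 : Θ) (A : (Fin q → Θ) → ℝ),
      (∀ ω, A ω = 1) → True := fun _ _ _ _ => trivial
  have hpm : ∀ (i : Fin q) (θ0 : Θ),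
      ∑ ω : Fin q → Θ, P ω * (if ω i = θ0 then (1:ℝ) else 0) = pstar θ0 := by
    intro i θ0
    set G : Fin q → Θ → ℝ := fun j x => if j = i then (if x = θ0 then pstar x else 0) else pstar x
      with hG
    have hterm : ∀ ω : Fin q → Θ, P ω * (if ω i = θ0 then (1:ℝ) else 0) = ∏ j, G j (ω j) := by
      intro ω
      by_cases h1 : ω i = θ0
      · rw [if_pos h1, mul_one]
        apply Finset.prod_congr rfl
        intro j _
        by_cases hj : j = i
        · subst hj; simp only [hG, if_pos rfl, h1, if_true, eq_self_iff_true]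
        · simp only [hG, if_neg hj]
      · rw [if_neg h1, mul_zero]
        have : G i (ω i) = 0 := by simp only [hG, if_pos rfl, if_neg h1]
        rw [eq_comm]
        exact Finset.prod_eq_zero (mem_univ i) this
    rw [Finset.sum_congr rfl fun ω _ => hterm ω]
    have hpu := Finset.prod_univ_sum (fun _ : Fin q => (univ : Finset Θ)) (fun j x => G j x)
    rw [Fintype.piFinset_univ] at hpu
    rw [← hpu]
    have hGi : ∑ x, G i x = pstar θ0 := by
      simp only [hG, if_pos rfl, eq_self_iff_true, if_true]
      exact (Finset.sum_ite_eq' univ θ0 pstar).trans (if_pos (mem_univ _))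
    have hGj : ∀ j, j ≠ i → ∑ x, G j x = 1 := by
      intro j hj; simp only [hG, if_neg hj]; exact hps1
    rw [← Finset.mul_prod_erase univ _ (mem_univ i), hGi,
      Finset.prod_congr rfl (fun j hj => hGj j (Finset.ne_of_mem_erase hj)),
      Finset.prod_const_one, mul_one]
  -- barycenter
  have hbary : ∀ θ0 : Θ, ∑ ω : Fin q → Θ, P ω * emp ω θ0 = pstar θ0 := by
    intro θ0
    have : ∀ ω : Fin q → Θ, P ω * emp ω θ0
        = (∑ i, P ω * (if ω i = θ0 then (1:ℝ) else 0)) / q := by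
      intro ω
      simp only [hemp_def]
      rw [← Finset.mul_sum]
      ring
    rw [Finset.sum_congr rfl fun ω _ => this ω, ← Finset.sum_div, Finset.sum_comm]
    rw [Finset.sum_congr rfl fun i (_ : i ∈ univ) => hpm i θ0]
    rw [Finset.sum_const, Finset.card_univ, Fintype.card_fin, nsmul_eq_mul,
      mul_comm, mul_div_assoc, div_self hq0.ne', mul_one]
  -- the decomposition
  set S : Finset (Θ → ℝ) := Finset.image emp univ with hS_def
  set γ : (Θ → ℝ) → ℝ := fun p => ∑ ω : Fin q → Θ, if emp ω = p then P ω else 0 with hγ_def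
  have hpush : ∀ F : (Θ → ℝ) → ℝ, ∑ p ∈ S, γ p * F p = ∑ ω : Fin q → Θ, P ω * F (emp ω) := by
    intro F
    calc ∑ p ∈ S, γ p * F p
        = ∑ p ∈ S, ∑ ω : Fin q → Θ, (if emp ω = p then P ω * F p else 0) := by
          apply Finset.sum_congr rfl
          intro p _
          rw [hγ_def, Finset.sum_mul]
          exact Finset.sum_congr rfl fun ω _ => by rw [ite_mul, zero_mul]
      _ = ∑ ω : Fin q → Θ, ∑ p ∈ S, (if emp ω = p then P ω * F p else 0) := Finset.sum_comm
      _ = ∑ ω : Fin q → Θ, P ω * F (emp ω) := by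
          apply Finset.sum_congr rfl
          intro ω _
          rw [Finset.sum_ite_eq S (emp ω) (fun p => P ω * F p)]
          exact if_pos (Finset.mem_image_of_mem emp (mem_univ ω))
  have hγ0 : ∀ p, 0 ≤ γ p := by
    intro p
    apply Finset.sum_nonneg
    intro ω _
    split_ifs
    · exact hP0 ω
    · exact le_refl 0
  -- optimal profile at pstar
  have hFne : ((fun c => ∑ θ, pstar θ * h θ c) '' Fpers u pstar).Nonempty := by
    refine ⟨_, ⟨fun r => decide (0 ≤ ∑ θ, pstar θ * u r θ), ⟨?_, ?_⟩, rfl⟩⟩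
    · intro r hr; exact decide_eq_true hr.le
    · intro r hr; exact decide_eq_false (not_le.mpr hr)
  have hFfin : ((fun c => ∑ θ, pstar θ * h θ c) '' Fpers u pstar).Finite :=
    (Set.toFinite (Fpers u pstar)).image _
  obtain ⟨cstar, hcstar_mem, hcstar_val⟩ := hFne.csSup_mem hFfin
  -- means and centered utilities
  set μ : R → ℝ := fun r => ∑ θ, pstar θ * u r θ with hμ_def
  have habs1 : ∀ (p : Θ → ℝ), (∀ θ, 0 ≤ p θ) → (∑ θ, p θ = 1) →
      ∀ r, |∑ θ, p θ * u r θ| ≤ 1 := by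
    intro p hp0 hp1 r
    calc |∑ θ, p θ * u r θ| ≤ ∑ θ, |p θ * u r θ| := Finset.abs_sum_le_sum_abs _ _
      _ ≤ ∑ θ, p θ := by
          apply Finset.sum_le_sum
          intro θ _
          rw [abs_mul, abs_of_nonneg (hp0 θ)]
          calc p θ * |u r θ| ≤ p θ * 1 := by
                apply mul_le_mul_of_nonneg_left _ (hp0 θ)
                rw [abs_le]; exact ⟨(hu r θ).1, (hu r θ).2⟩
            _ = p θ := mul_one _
      _ = 1 := hp1
  have hμ1 : ∀ r, |μ r| ≤ 1 := fun r => habs1 pstar hps0 hps1 r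
  set fr : R → Θ → ℝ := fun r θ' => u r θ' - μ r with hfr_def
  have hfr2 : ∀ r θ', |fr r θ'| ≤ 2 := by
    intro r θ'
    have h1 := (hu r θ').1
    have h2 := (hu r θ').2
    have h3 := abs_le.mp (hμ1 r)
    rw [abs_le]
    constructor <;> simp only [hfr_def] <;> [linarith [h3.2]; linarith [h3.1]]
  have hfrmean : ∀ r, ∑ θ', pstar θ' * fr r θ' = 0 := by
    intro r
    simp only [hfr_def, mul_sub]
    rw [Finset.sum_sub_distrib, ← Finset.sum_mul, hps1, one_mul, hμ_def, sub_self]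
  -- modified profile
  set ctil : (Θ → ℝ) → R → Bool := fun p r =>
    if ε < ∑ θ, p θ * u r θ then true
    else if ∑ θ, p θ * u r θ < -ε then false else cstar r with hctil_def
  have hctil_mem : ∀ p, ctil p ∈ Feps u ε p := by
    intro p
    constructor
    · intro r hr; simp only [hctil_def]; rw [if_pos hr]
    · intro r hr
      simp only [hctil_def]
      rw [if_neg (by linarith), if_pos hr]
  -- empirical utility identity
  have hempu : ∀ (ω : Fin q → Θ) (r : R), (q:ℝ) * (∑ θ, emp ω θ * u r θ) = ∑ i, u r (ω i) := by
    intro ω r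
    have : ∀ θ, emp ω θ * u r θ = (∑ i, if ω i = θ then u r θ else 0) / q := by
      intro θ
      simp only [hemp_def]
      rw [div_mul_eq_mul_div, Finset.sum_mul]
      congr 1
      exact Finset.sum_congr rfl fun i _ => by rw [ite_mul, one_mul, zero_mul]
    rw [Finset.sum_congr rfl fun θ _ => this θ, ← Finset.sum_div, mul_div_cancel₀ _ hq0.ne']
    rw [Finset.sum_comm]
    apply Finset.sum_congr rfl
    intro i _
    have hrw : ∀ θ : Θ, (if ω i = θ then u r θ else 0) = (if ω i = θ then u r (ω i) else 0) := by
      intro θ; split_ifs with hh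
      · rw [hh]
      · rfl
    rw [Finset.sum_congr rfl fun θ _ => hrw θ,
      Finset.sum_ite_eq univ (ω i) (fun _ => u r (ω i))]
    exact if_pos (mem_univ _)
  -- flip indicator is dominated by two deviation indicators
  have hflip : ∀ (ω : Fin q → Θ) (r : R),
      (if ctil (emp ω) r ≠ cstar r then (1:ℝ) else 0) ≤
        (if (q:ℝ)*ε ≤ ∑ i, fr r (ω i) then (1:ℝ) else 0) +
        (if (q:ℝ)*ε ≤ ∑ i, -(fr r (ω i)) then (1:ℝ) else 0) := by
    intro ω r
    by_cases hne : ctil (emp ω) r = cstar r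
    · rw [if_neg (by simpa using hne)]
      have t1 : (0:ℝ) ≤ (if (q:ℝ)*ε ≤ ∑ i, fr r (ω i) then (1:ℝ) else 0) := by positivity
      have t2 : (0:ℝ) ≤ (if (q:ℝ)*ε ≤ ∑ i, -(fr r (ω i)) then (1:ℝ) else 0) := by positivity
      linarith
    · rw [if_pos hne]
      have hsumfr : ∑ i, fr r (ω i) = (q:ℝ) * (∑ θ, emp ω θ * u r θ) - (q:ℝ) * μ r := by
        simp only [hfr_def]
        rw [Finset.sum_sub_distrib, Finset.sum_const, Finset.card_univ, Fintype.card_fin,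
          nsmul_eq_mul, hempu ω r]
      by_cases h1 : ε < ∑ θ, emp ω θ * u r θ
      · -- cstar r = false, μ r ≤ 0
        have hct : ctil (emp ω) r = true := by simp only [hctil_def]; rw [if_pos h1]
        have hcs : cstar r = false := by
          cases hcsr : cstar r
          · rfl
          · exact absurd (hct.trans hcsr.symm) hne
        have hμr : μ r ≤ 0 := by
          by_contra hcon
          push_neg at hcon
          simp [hcstar_mem.1 r hcon] at hcs
        have hdev : (q:ℝ)*ε ≤ ∑ i, fr r (ω i) := by
          rw [hsumfr]
          have := mul_lt_mul_of_pos_left h1 hq0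
          nlinarith
        rw [if_pos hdev]
        have t2 : (0:ℝ) ≤ (if (q:ℝ)*ε ≤ ∑ i, -(fr r (ω i)) then (1:ℝ) else 0) := by positivity
        linarith
      · by_cases h2 : ∑ θ, emp ω θ * u r θ < -ε
        · -- cstar r = true, μ r ≥ 0
          have hct : ctil (emp ω) r = false := by
            simp only [hctil_def]; rw [if_neg h1, if_pos h2]
          have hcs : cstar r = true := by
            cases hcsr : cstar r
            · exact absurd (hct.trans hcsr.symm) hne
            · rfl
          have hμr : 0 ≤ μ r := by
            by_contra hcon
            push_neg at hcon
            simp [hcstar_mem.2 r hcon] at hcs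
          have hdev : (q:ℝ)*ε ≤ ∑ i, -(fr r (ω i)) := by
            rw [Finset.sum_neg_distrib, hsumfr]
            have := mul_lt_mul_of_pos_left h2 hq0
            nlinarith
          rw [if_pos hdev]
          have t1 : (0:ℝ) ≤ (if (q:ℝ)*ε ≤ ∑ i, fr r (ω i) then (1:ℝ) else 0) := by positivity
          linarith
        · exfalso
          apply hne
          simp only [hctil_def]
          rw [if_neg h1, if_neg h2]
  -- core concentration estimate
  have hcore : ∀ (r : R) (θ0 : Θ),
      ∑ ω : Fin q → Θ, P ω * emp ω θ0 * (if ctil (emp ω) r ≠ cstar r then (1:ℝ) else 0) ≤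
        α * pstar θ0 := by
    intro r θ0
    by_cases hε2 : ε ≤ 2
    · -- main case
      have ht0 : (0:ℝ) ≤ ε/8 := by linarith
      have ht : |ε/8| ≤ 1/2 := by rw [abs_of_nonneg ht0]; linarith
      have hexp : Real.exp (2*(ε/8) + 4 * (Fintype.card (Fin q)) * (ε/8)^2 - (ε/8)*((q:ℝ)*ε))
          ≤ α/4 := by
        rw [← hexpL]
        apply Real.exp_le_exp.mpr
        rw [Fintype.card_fin]
        have e1 : 4 * (q:ℝ) * (ε/8)^2 - (ε/8)*((q:ℝ)*ε) = -((q:ℝ)*ε^2/16) := by ring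
        have e2 : 2*L ≤ (q:ℝ)*ε^2/16 := by linarith [hqe2]
        have e3 : 2*(ε/8) ≤ L := by linarith
        linarith
      have hb : ∀ f : Θ → ℝ, (∀ θ', |f θ'| ≤ 2) → (∑ θ', pstar θ' * f θ' = 0) →
          ∀ i : Fin q, ∑ ω : Fin q → Θ, P ω * ((if ω i = θ0 then (1:ℝ) else 0) *
            (if (q:ℝ)*ε ≤ ∑ j, f (ω j) then (1:ℝ) else 0)) ≤ pstar θ0 * (α/4) := by
        intro f hf2 hfm i
        have hk := key_est pstar f hps0 hps1 hf2 hfm i θ0 ht0 ht ((q:ℝ)*ε)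
        calc ∑ ω : Fin q → Θ, P ω * ((if ω i = θ0 then (1:ℝ) else 0) *
              (if (q:ℝ)*ε ≤ ∑ j, f (ω j) then (1:ℝ) else 0))
            = ∑ ω : Fin q → Θ, (∏ j, pstar (ω j)) * ((if ω i = θ0 then (1:ℝ) else 0) *
              (if (q:ℝ)*ε ≤ ∑ j, f (ω j) then (1:ℝ) else 0)) := rfl
          _ ≤ pstar θ0 * Real.exp (2*(ε/8) + 4 * (Fintype.card (Fin q)) * (ε/8)^2
              - (ε/8)*((q:ℝ)*ε)) := hk
          _ ≤ pstar θ0 * (α/4) := mul_le_mul_of_nonneg_left hexp (hps0 θ0)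
      have hexpand : ∀ ω : Fin q → Θ,
          P ω * emp ω θ0 * (if ctil (emp ω) r ≠ cstar r then (1:ℝ) else 0)
          = (∑ i, P ω * ((if ω i = θ0 then (1:ℝ) else 0) *
              (if ctil (emp ω) r ≠ cstar r then (1:ℝ) else 0))) / q := by
        intro ω
        have hA : emp ω θ0 = (∑ i, if ω i = θ0 then (1:ℝ) else 0) / q := rfl
        obtain ⟨B, hB⟩ : ∃ B, (if ctil (emp ω) r ≠ cstar r then (1:ℝ) else 0) = B := ⟨_, rfl⟩
        rw [hB, hA]
        rw [show ∑ i, P ω * ((if ω i = θ0 then (1:ℝ) else 0) * B)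
            = P ω * B * ∑ i, (if ω i = θ0 then (1:ℝ) else 0) by
          rw [Finset.mul_sum]; exact Finset.sum_congr rfl fun i _ => by ring]
        ring
      rw [Finset.sum_congr rfl fun ω _ => hexpand ω, ← Finset.sum_div, Finset.sum_comm]
      have hinner : ∀ i : Fin q, ∑ ω : Fin q → Θ, P ω * ((if ω i = θ0 then (1:ℝ) else 0) *
          (if ctil (emp ω) r ≠ cstar r then (1:ℝ) else 0)) ≤ pstar θ0 * (α/2) := by
        intro i
        have hptw : ∀ ω : Fin q → Θ, P ω * ((if ω i = θ0 then (1:ℝ) else 0) *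
            (if ctil (emp ω) r ≠ cstar r then (1:ℝ) else 0)) ≤
            P ω * ((if ω i = θ0 then (1:ℝ) else 0) *
              (if (q:ℝ)*ε ≤ ∑ j, fr r (ω j) then (1:ℝ) else 0)) +
            P ω * ((if ω i = θ0 then (1:ℝ) else 0) *
              (if (q:ℝ)*ε ≤ ∑ j, -(fr r (ω j)) then (1:ℝ) else 0)) := by
          intro ω
          have hfl := hflip ω r
          have hnn : (0:ℝ) ≤ P ω * (if ω i = θ0 then (1:ℝ) else 0) := by
            apply mul_nonneg (hP0 ω); positivity
          calc P ω * ((if ω i = θ0 then (1:ℝ) else 0) *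
                (if ctil (emp ω) r ≠ cstar r then (1:ℝ) else 0))
              = (P ω * (if ω i = θ0 then (1:ℝ) else 0)) *
                (if ctil (emp ω) r ≠ cstar r then (1:ℝ) else 0) := by ring
            _ ≤ (P ω * (if ω i = θ0 then (1:ℝ) else 0)) *
                ((if (q:ℝ)*ε ≤ ∑ j, fr r (ω j) then (1:ℝ) else 0) +
                 (if (q:ℝ)*ε ≤ ∑ j, -(fr r (ω j)) then (1:ℝ) else 0)) :=
                mul_le_mul_of_nonneg_left hfl hnn
            _ = _ := by ring
        have hfneg2 : ∀ θ', |(fun θ'' => -(fr r θ'')) θ'| ≤ 2 := by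
          intro θ'; simpa using hfr2 r θ'
        have hfnegm : ∑ θ', pstar θ' * (fun θ'' => -(fr r θ'')) θ' = 0 := by
          simp only [mul_neg]
          rw [Finset.sum_neg_distrib, hfrmean r, neg_zero]
        have h1 := hb (fr r) (hfr2 r) (hfrmean r) i
        have h2' := hb (fun θ'' => -(fr r θ'')) hfneg2 hfnegm i
        have h2 : ∑ ω : Fin q → Θ, P ω * ((if ω i = θ0 then (1:ℝ) else 0) *
            (if (q:ℝ)*ε ≤ ∑ j, -(fr r (ω j)) then (1:ℝ) else 0)) ≤ pstar θ0 * (α/4) := h2'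
        calc ∑ ω : Fin q → Θ, P ω * ((if ω i = θ0 then (1:ℝ) else 0) *
              (if ctil (emp ω) r ≠ cstar r then (1:ℝ) else 0))
            ≤ ∑ ω : Fin q → Θ, (P ω * ((if ω i = θ0 then (1:ℝ) else 0) *
                (if (q:ℝ)*ε ≤ ∑ j, fr r (ω j) then (1:ℝ) else 0)) +
              P ω * ((if ω i = θ0 then (1:ℝ) else 0) *
                (if (q:ℝ)*ε ≤ ∑ j, -(fr r (ω j)) then (1:ℝ) else 0))) :=
              Finset.sum_le_sum fun ω _ => hptw ω
          _ = (∑ ω : Fin q → Θ, P ω * ((if ω i = θ0 then (1:ℝ) else 0) *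
                (if (q:ℝ)*ε ≤ ∑ j, fr r (ω j) then (1:ℝ) else 0))) +
              ∑ ω : Fin q → Θ, P ω * ((if ω i = θ0 then (1:ℝ) else 0) *
                (if (q:ℝ)*ε ≤ ∑ j, -(fr r (ω j)) then (1:ℝ) else 0)) :=
              Finset.sum_add_distrib
          _ ≤ pstar θ0 * (α/4) + pstar θ0 * (α/4) := add_le_add h1 h2
          _ = pstar θ0 * (α/2) := by ring
      calc (∑ i : Fin q, ∑ ω : Fin q → Θ, P ω * ((if ω i = θ0 then (1:ℝ) else 0) *
            (if ctil (emp ω) r ≠ cstar r then (1:ℝ) else 0))) / q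
          ≤ (∑ _i : Fin q, pstar θ0 * (α/2)) / q :=
            (div_le_div_iff_of_pos_right hq0).mpr (Finset.sum_le_sum fun i _ => hinner i)
        _ = pstar θ0 * (α/2) := by
            rw [Finset.sum_const, Finset.card_univ, Fintype.card_fin, nsmul_eq_mul,
              mul_div_cancel_left₀ _ hq0.ne']
        _ ≤ α * pstar θ0 := by
            have hnn := mul_nonneg hα0.le (hps0 θ0)
            nlinarith
    · -- ε > 2 : no flips ever
      push_neg at hε2
      have hz : ∀ ω : Fin q → Θ, (if ctil (emp ω) r ≠ cstar r then (1:ℝ) else 0) = 0 := by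
        intro ω
        have h3 := abs_le.mp (habs1 (emp ω) (hemp0 ω) (hempsum ω) r)
        have hceq : ctil (emp ω) r = cstar r := by
          simp only [hctil_def]
          rw [if_neg (not_lt.mpr (by linarith)), if_neg (not_lt.mpr (by linarith))]
        rw [if_neg (not_ne_iff.mpr hceq)]
      rw [Finset.sum_congr rfl fun ω _ => by rw [hz ω, mul_zero], Finset.sum_const_zero]
      exact mul_nonneg hα0.le (hps0 θ0)
  -- stability application
  have hθbound : ∀ θ0 : Θ, pstar θ0 * (h θ0 cstar * (1 - α*β)) ≤
      ∑ ω : Fin q → Θ, P ω * emp ω θ0 * g θ0 (ctil (emp ω)) := by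
    intro θ0
    rcases eq_or_lt_of_le (hps0 θ0) with h0 | h0
    · rw [← h0, zero_mul]
      apply Finset.sum_nonneg
      intro ω _
      exact mul_nonneg (mul_nonneg (hP0 ω) (hemp0 ω θ0)) (hg01 θ0 _).1
    · set y : (R → Bool) → ℝ := fun c =>
        (∑ ω : Fin q → Θ, if ctil (emp ω) = c then P ω * emp ω θ0 else 0) / pstar θ0
        with hy_def
      have hcollapse : ∀ G : (R → Bool) → ℝ,
          ∑ c : R → Bool,
            (∑ ω : Fin q → Θ, if ctil (emp ω) = c then P ω * emp ω θ0 else 0) * G c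
          = ∑ ω : Fin q → Θ, P ω * emp ω θ0 * G (ctil (emp ω)) := by
        intro G
        calc ∑ c : R → Bool,
              (∑ ω : Fin q → Θ, if ctil (emp ω) = c then P ω * emp ω θ0 else 0) * G c
            = ∑ c : R → Bool, ∑ ω : Fin q → Θ,
                (if ctil (emp ω) = c then P ω * emp ω θ0 * G c else 0) := by
              apply Finset.sum_congr rfl; intro c _
              rw [Finset.sum_mul]
              exact Finset.sum_congr rfl fun ω _ => by rw [ite_mul, zero_mul]
          _ = ∑ ω : Fin q → Θ, ∑ c : R → Bool,
                (if ctil (emp ω) = c then P ω * emp ω θ0 * G c else 0) := Finset.sum_comm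
          _ = ∑ ω : Fin q → Θ, P ω * emp ω θ0 * G (ctil (emp ω)) := by
              apply Finset.sum_congr rfl; intro ω _
              rw [Finset.sum_ite_eq univ (ctil (emp ω)) (fun c => P ω * emp ω θ0 * G c)]
              exact if_pos (mem_univ _)
      have hy0 : ∀ c, 0 ≤ y c := by
        intro c
        apply div_nonneg _ h0.le
        apply Finset.sum_nonneg; intro ω _
        split_ifs
        · exact mul_nonneg (hP0 ω) (hemp0 ω θ0)
        · exact le_refl 0
      have hy1 : ∑ c, y c = 1 := by
        simp only [hy_def]
        rw [← Finset.sum_div]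
        have h1 : ∑ c : R → Bool,
            (∑ ω : Fin q → Θ, if ctil (emp ω) = c then P ω * emp ω θ0 else 0) = pstar θ0 := by
          have hc1 := hcollapse (fun _ => 1)
          simp only [mul_one] at hc1
          rw [hc1, hbary θ0]
        rw [h1, div_self h0.ne']
      have hynoise : ∀ r : R,
          ∑ c' ∈ univ.filter (fun c' : R → Bool => c' r ≠ cstar r), y c' ≤ α := by
        intro r
        have hnum : ∑ c' ∈ univ.filter (fun c' : R → Bool => c' r ≠ cstar r),
            (∑ ω : Fin q → Θ, if ctil (emp ω) = c' then P ω * emp ω θ0 else 0)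
            = ∑ ω : Fin q → Θ, P ω * emp ω θ0 *
                (if ctil (emp ω) r ≠ cstar r then (1:ℝ) else 0) := by
          rw [Finset.sum_comm]
          apply Finset.sum_congr rfl
          intro ω _
          rw [Finset.sum_ite_eq (univ.filter (fun c' : R → Bool => c' r ≠ cstar r))
            (ctil (emp ω)) (fun _ => P ω * emp ω θ0)]
          by_cases hc : ctil (emp ω) r ≠ cstar r
          · rw [if_pos hc, mul_one,
              if_pos (show ctil (emp ω) ∈ univ.filter (fun c' : R → Bool => c' r ≠ cstar r)
                from Finset.mem_filter.mpr ⟨mem_univ _, hc⟩)]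
          · rw [if_neg hc, mul_zero,
              if_neg (show ctil (emp ω) ∉ univ.filter (fun c' : R → Bool => c' r ≠ cstar r)
                from fun hmem => hc (Finset.mem_filter.mp hmem).2)]
        simp only [hy_def]
        rw [← Finset.sum_div, hnum, div_le_iff₀ h0]
        exact hcore r θ0
      have hst := hstab θ0 cstar α ⟨hα0, hα1⟩ y hy0 hy1 hynoise
      have hyg : ∑ c' : R → Bool, y c' * g θ0 c'
          = (∑ ω : Fin q → Θ, P ω * emp ω θ0 * g θ0 (ctil (emp ω))) / pstar θ0 := by
        simp only [hy_def]
        calc ∑ c' : R → Bool,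
              (∑ ω : Fin q → Θ, if ctil (emp ω) = c' then P ω * emp ω θ0 else 0) / pstar θ0
                * g θ0 c'
            = ∑ c' : R → Bool,
              ((∑ ω : Fin q → Θ, if ctil (emp ω) = c' then P ω * emp ω θ0 else 0) * g θ0 c')
                / pstar θ0 := Finset.sum_congr rfl fun c' _ => by ring
          _ = (∑ c' : R → Bool,
              (∑ ω : Fin q → Θ, if ctil (emp ω) = c' then P ω * emp ω θ0 else 0) * g θ0 c')
                / pstar θ0 := (Finset.sum_div _ _ _).symm
          _ = _ := by rw [hcollapse (g θ0)]
      rw [hyg] at hst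
      have hst2 := (le_div_iff₀ h0).mp hst
      calc pstar θ0 * (h θ0 cstar * (1 - α*β)) = h θ0 cstar * (1-α*β) * pstar θ0 := by ring
        _ ≤ _ := hst2
  -- assemble
  refine ⟨S, γ, ?_, ?_, ?_, ?_, ?_⟩
  · intro p hp
    obtain ⟨ω, -, rfl⟩ := Finset.mem_image.mp hp
    refine ⟨hemp0 ω, hempsum ω, fun θ => ⟨(univ.filter fun i => ω i = θ).card, ?_⟩⟩
    rw [show emp ω θ = (∑ i, if ω i = θ then (1:ℝ) else 0)/q from rfl, Finset.sum_boole]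
  · intro p _; exact hγ0 p
  · have hc1 := hpush (fun _ => 1)
    simp only [mul_one] at hc1
    rw [hc1, hP1]
  · intro θ
    rw [hpush (fun p => p θ)]
    exact hbary θ
  · have hsupS : ∀ p : Θ → ℝ, ∑ θ, p θ * g θ (ctil p) ≤
        sSup ((fun c => ∑ θ, p θ * g θ c) '' Feps u ε p) := by
      intro p
      apply le_csSup
      · exact (((Set.toFinite (Feps u ε p))).image _).bddAbove
      · exact ⟨ctil p, hctil_mem p, rfl⟩
    calc (1 - η) * sSup ((fun c => ∑ θ, pstar θ * h θ c) '' Fpers u pstar)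
        = (1 - η) * ∑ θ, pstar θ * h θ cstar := by rw [← hcstar_val]
      _ ≤ (1 - α*β) * ∑ θ, pstar θ * h θ cstar := by
          have hnn : 0 ≤ ∑ θ, pstar θ * h θ cstar :=
            Finset.sum_nonneg fun θ _ => mul_nonneg (hps0 θ) (hh01 θ _).1
          apply mul_le_mul_of_nonneg_right _ hnn
          linarith
      _ = ∑ θ0, pstar θ0 * (h θ0 cstar * (1 - α*β)) := by
          rw [Finset.mul_sum]
          exact Finset.sum_congr rfl fun θ0 _ => by ring
      _ ≤ ∑ θ0, ∑ ω : Fin q → Θ, P ω * emp ω θ0 * g θ0 (ctil (emp ω)) :=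
          Finset.sum_le_sum fun θ0 _ => hθbound θ0
      _ = ∑ ω : Fin q → Θ, P ω * ∑ θ0, emp ω θ0 * g θ0 (ctil (emp ω)) := by
          rw [Finset.sum_comm]
          apply Finset.sum_congr rfl
          intro ω _
          rw [Finset.mul_sum]
          exact Finset.sum_congr rfl fun θ0 _ => by ring
      _ ≤ ∑ ω : Fin q → Θ, P ω *
            sSup ((fun c => ∑ θ, emp ω θ * g θ c) '' Feps u ε (emp ω)) := by
          apply Finset.sum_le_sum
          intro ω _
          exact mul_le_mul_of_nonneg_left (hsupS (emp ω)) (hP0 ω)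
      _ = ∑ p ∈ S, γ p * sSup ((fun c => ∑ θ, p θ * g θ c) '' Feps u ε p) :=
          (hpush (fun p => sSup ((fun c => ∑ θ, p θ * g θ c) '' Feps u ε p))).symm
end
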